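/- arXiv:1110.5488 — 5 statements merged into one kernel-verified Lean document; each statement's English description precedes it below -/
import Mathlib

section
/- Suppose the Perron–Frobenius operator P is quasi-compact of diagonal type on B, i.e. P = Σ_{i=1}^s λ_i Π_i + Q where the λ_i are complex numbers of modulus 1, the Π_i are finite-rank bounded projections on B with Π_iΠ_j = 0 for i ≠ j, and Q is a bounded operator on B with spectral radius strictly less than 1 satisfying QΠ_i = Π_iQ = 0 for all i. Then for every f ∈ B with f ≥ 0 m-a.e. and ∫ f dm = 1, the Cesàro averages (1/n) Σ_{k=0}^{n-1} P^k f converge in the norm of B to some f* ∈ B with f* ≥ 0 m-a.e., ∫ f* dm = 1 and Pf* = f*; consequently the measure μ_f with dμ_f/dm = f* is a T-invariant probability absolutely continuous with respect to m, and 1 is an eigenvalue of P on B. -/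
/-!
Since the `Πᵢ` are orthogonal idempotents killed by `Q` on both sides,
`Pᵏ = ∑ λᵢᵏ Πᵢ + Qᵏ` for `k ≥ 1`, and Gelfand's formula makes `∑ ‖Qᵏ‖` finite. As
`(1/n) ∑_{k<n} λᵏ` tends to `1` if `λ = 1` and to `0` otherwise on the closed unit disc, the
Cesàro means of `Pᵏ f` converge to `f* = ∑_{λᵢ = 1} Πᵢ f`, which `P` fixes. Nonnegativity and
total mass are preserved by `P`, hence by Cesàro means, and pass to the limit because
`g ↦ ∫_A g` is continuous on `L¹`; then `∫_{T⁻¹A} f* = ∫_A P f* = ∫_A f*` is the invariance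
of `f* dm`.

Nonnegativity of complex densities is the order of `ComplexOrder`: `0 ≤ z ↔ z ∈ [0, ∞)`.
-/

open MeasureTheory Filter Topology
open scoped ENNReal ComplexOrder

section Cesaro

variable (𝕜 : Type*) {E F : Type*} [RCLike 𝕜] [NormedAddCommGroup E] [NormedSpace 𝕜 E]
  [NormedAddCommGroup F] [NormedSpace 𝕜 F]

noncomputable def cesaroMean (x : ℕ → E) (n : ℕ) : E :=
  (n : 𝕜)⁻¹ • ∑ k ∈ Finset.range n, x k

variable {𝕜}

theorem ContinuousLinearMap.map_cesaroMean (φ : E →L[𝕜] F) (x : ℕ → E) (n : ℕ) :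
    φ (cesaroMean 𝕜 x n) = cesaroMean 𝕜 (fun k => φ (x k)) n := by
  simp only [cesaroMean, map_smul, map_sum]

theorem cesaroMean_const (c : E) {n : ℕ} (hn : n ≠ 0) : cesaroMean 𝕜 (fun _ => c) n = c := by
  rw [cesaroMean, Finset.sum_const, Finset.card_range, ← Nat.cast_smul_eq_nsmul 𝕜, smul_smul,
    inv_mul_cancel₀ (Nat.cast_ne_zero.2 hn), one_smul]

theorem tendsto_cesaroMean_zero_of_norm_sum_le {x : ℕ → E} {C : ℝ}
    (hC : ∀ n, ‖∑ k ∈ Finset.range n, x k‖ ≤ C) :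
    Tendsto (cesaroMean 𝕜 x) atTop (𝓝 0) := by
  refine squeeze_zero_norm (fun n => ?_)
    (by simpa using (tendsto_inv_atTop_nhds_zero_nat (𝕜 := ℝ)).mul_const C)
  rw [cesaroMean, norm_smul, norm_inv, RCLike.norm_natCast]
  exact mul_le_mul_of_nonneg_left (hC n) (by positivity)

theorem tendsto_cesaroMean_zero_of_summable_norm {x : ℕ → E} (hx : Summable fun k => ‖x k‖) :
    Tendsto (cesaroMean 𝕜 x) atTop (𝓝 0) :=
  tendsto_cesaroMean_zero_of_norm_sum_le fun _ =>
    (norm_sum_le _ _).trans (hx.sum_le_tsum _ fun _ _ => norm_nonneg _)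

theorem tendsto_cesaroMean_pow {c : 𝕜} (hc : ‖c‖ ≤ 1) :
    Tendsto (cesaroMean 𝕜 (c ^ ·)) atTop (𝓝 (if c = 1 then 1 else 0)) := by
  split_ifs with h1
  · subst h1
    refine tendsto_const_nhds.congr' ?_
    filter_upwards [eventually_ne_atTop 0] with n hn
    simpa using (cesaroMean_const (1 : 𝕜) hn).symm
  · refine tendsto_cesaroMean_zero_of_norm_sum_le (C := 2 / ‖c - 1‖) fun n => ?_
    rw [geom_sum_eq h1, norm_div]
    gcongr
    calc ‖c ^ n - 1‖ ≤ ‖c ^ n‖ + ‖(1 : 𝕜)‖ := norm_sub_le _ _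
      _ ≤ 2 := by rw [norm_pow, norm_one]; linarith [pow_le_one₀ (n := n) (norm_nonneg c) hc]

theorem tendsto_cesaroMean_of_summable_norm_sub {ι : Type*} [Fintype ι] {lam : ι → 𝕜}
    (hlam : ∀ i, ‖lam i‖ ≤ 1) (v : ι → E) {x : ℕ → E}
    (hx : Summable fun k => ‖x k - ∑ i, lam i ^ k • v i‖) :
    Tendsto (cesaroMean 𝕜 x) atTop (𝓝 (∑ i, if lam i = 1 then v i else 0)) := by
  have hsplit : ∀ n, cesaroMean 𝕜 x n = ∑ i, cesaroMean 𝕜 (lam i ^ ·) n • v i +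
      cesaroMean 𝕜 (fun k => x k - ∑ i, lam i ^ k • v i) n := by
    intro n
    simp only [cesaroMean, smul_assoc, Finset.sum_smul, ← Finset.smul_sum, ← smul_add]
    rw [Finset.sum_comm, ← Finset.sum_add_distrib]
    simp
  have hlim := (tendsto_finsetSum Finset.univ fun i _ =>
    (tendsto_cesaroMean_pow (hlam i)).smul_const (v i)).add
    (tendsto_cesaroMean_zero_of_summable_norm (𝕜 := 𝕜) hx)
  simpa [ite_smul, ← hsplit] using hlim

theorem cesaroMean_nonneg {x : ℕ → ℂ} (hx : ∀ k, 0 ≤ x k) (n : ℕ) : 0 ≤ cesaroMean ℂ x n :=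
  mul_nonneg (by positivity) (Finset.sum_nonneg fun k _ => hx k)

end Cesaro

theorem add_pow_succ_of_mul_eq_zero {R : Type*} [Semiring R] {a b : R} (hab : a * b = 0)
    (hba : b * a = 0) (n : ℕ) : (a + b) ^ (n + 1) = a ^ (n + 1) + b ^ (n + 1) := by
  induction n with
  | zero => simp
  | succ n ih =>
    have hab' : a ^ (n + 1) * b = 0 := by rw [pow_succ, mul_assoc, hab, mul_zero]
    have hba' : b ^ (n + 1) * a = 0 := by rw [pow_succ, mul_assoc, hba, mul_zero]
    rw [pow_succ, ih, add_mul, mul_add, mul_add, hab', hba', add_zero, zero_add, ← pow_succ,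
      ← pow_succ]

namespace OrthogonalIdempotents

variable {𝕜 R ι : Type*} [CommSemiring 𝕜] [Semiring R] [Algebra 𝕜 R] [Fintype ι]
  {e : ι → R}

theorem sum_smul_mul (he : OrthogonalIdempotents e) (c : ι → 𝕜) (j : ι) :
    (∑ i, c i • e i) * e j = c j • e j := by
  classical
  simp only [Finset.sum_mul, smul_mul_assoc, he.mul_eq, smul_ite, smul_zero,
    Finset.sum_ite_eq', Finset.mem_univ, if_true]

theorem sum_smul_pow_succ (he : OrthogonalIdempotents e) (c : ι → 𝕜) (n : ℕ) :
    (∑ i, c i • e i) ^ (n + 1) = ∑ i, c i ^ (n + 1) • e i := by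
  induction n with
  | zero => simp
  | succ n ih =>
    rw [pow_succ', ih, Finset.mul_sum]
    simp only [mul_smul_comm, he.sum_smul_mul, smul_smul, pow_succ]

end OrthogonalIdempotents

theorem summable_norm_pow_of_spectralRadius_lt_one {A : Type*} [NormedRing A] [NormedAlgebra ℂ A]
    [CompleteSpace A] {a : A} (ha : spectralRadius ℂ a < 1) : Summable fun n => ‖a ^ n‖ := by
  obtain ⟨r, har, hr1⟩ := ENNReal.lt_iff_exists_nnreal_btwn.1 ha
  have hbound : ∀ᶠ n : ℕ in atTop, ‖a ^ n‖ ≤ (r : ℝ) ^ n := by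
    have hgelfand := spectrum.pow_nnnorm_pow_one_div_tendsto_nhds_spectralRadius a
    filter_upwards [hgelfand.eventually_lt_const har, eventually_ne_atTop 0] with n hn hn0
    rw [one_div, ENNReal.rpow_inv_lt_iff (by positivity), ENNReal.rpow_natCast] at hn
    exact_mod_cast hn.le
  refine summable_of_isBigO_nat
    (summable_geometric_of_lt_one r.coe_nonneg (by exact_mod_cast hr1)) ?_
  exact Asymptotics.IsBigO.of_bound 1 (by simpa using hbound)

section QuasiCompact

variable {B ι : Type*} [NormedAddCommGroup B] [NormedSpace ℂ B] [Fintype ι]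
  {P Q : B →L[ℂ] B} {lam : ι → ℂ} {Pr : ι → B →L[ℂ] B}
  (hPr : OrthogonalIdempotents Pr) (hQPr : ∀ i, Q * Pr i = 0) (hP : P = ∑ i, lam i • Pr i + Q)
include hPr hQPr hP

theorem apply_eq_smul_of_eq_sum_smul_add (i : ι) (f : B) : P (Pr i f) = lam i • Pr i f := by
  change (P * Pr i) f = _
  rw [hP, add_mul, hPr.sum_smul_mul, hQPr, add_zero]
  rfl

variable (hPrQ : ∀ i, Pr i * Q = 0)
include hPrQ

theorem pow_succ_eq_sum_smul_add (n : ℕ) :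
    P ^ (n + 1) = ∑ i, lam i ^ (n + 1) • Pr i + Q ^ (n + 1) := by
  have hSQ : (∑ i, lam i • Pr i) * Q = 0 := by
    simp only [Finset.sum_mul, smul_mul_assoc, hPrQ, smul_zero, Finset.sum_const_zero]
  have hQS : Q * ∑ i, lam i • Pr i = 0 := by
    simp only [Finset.mul_sum, mul_smul_comm, hQPr, smul_zero, Finset.sum_const_zero]
  rw [hP, add_pow_succ_of_mul_eq_zero hSQ hQS, hPr.sum_smul_pow_succ]

theorem tendsto_cesaroMean_pow_apply [CompleteSpace B] (hlam : ∀ i, ‖lam i‖ ≤ 1)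
    (hQ : spectralRadius ℂ Q < 1) (f : B) :
    Tendsto (cesaroMean ℂ fun k => (P ^ k) f) atTop
      (𝓝 (∑ i, if lam i = 1 then Pr i f else 0)) := by
  have hpow : ∀ k, (P ^ (k + 1)) f - ∑ i, lam i ^ (k + 1) • Pr i f = (Q ^ (k + 1)) f := by
    intro k
    rw [pow_succ_eq_sum_smul_add hPr hQPr hP hPrQ]
    simp
  have hQf : Summable fun k => ‖(Q ^ k) f‖ :=
    ((summable_norm_pow_of_spectralRadius_lt_one hQ).mul_right ‖f‖).of_nonneg_of_le
      (fun _ => norm_nonneg _) fun k => (Q ^ k).le_opNorm f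
  refine tendsto_cesaroMean_of_summable_norm_sub hlam _ ((summable_nat_add_iff 1).1 ?_)
  simpa only [hpow] using (summable_nat_add_iff 1).2 hQf

end QuasiCompact

section SetIntegral

variable {X E : Type*} [MeasurableSpace X] {μ : Measure X} [NormedAddCommGroup E]
  [NormedSpace ℂ E] [CompleteSpace E]

theorem Complex.ae_nonneg_of_forall_setIntegral_nonneg {g : X → ℂ} (hg : Integrable g μ)
    (h : ∀ A, MeasurableSet A → 0 ≤ ∫ x in A, g x ∂μ) : 0 ≤ᵐ[μ] g := by
  have hre : 0 ≤ᵐ[μ] fun x => (g x).re :=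
    MeasureTheory.ae_nonneg_of_forall_setIntegral_nonneg hg.re fun A hA _ => by
      show 0 ≤ ∫ x in A, RCLike.re (g x) ∂μ
      rw [integral_re hg.integrableOn]
      exact (Complex.nonneg_iff.1 (h A hA)).1
  have him : (fun x => (g x).im) =ᵐ[μ] 0 :=
    hg.im.ae_eq_zero_of_forall_setIntegral_eq_zero fun A hA _ => by
      show ∫ x in A, RCLike.im (g x) ∂μ = 0
      rw [integral_im hg.integrableOn]
      exact (Complex.nonneg_iff.1 (h A hA)).2.symm
  filter_upwards [hre, him] with x hxre hxim
  exact Complex.nonneg_iff.2 ⟨hxre, hxim.symm⟩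

variable (μ) in
noncomputable def setIntegralCLM (A : Set X) : Lp E 1 μ →L[ℂ] E :=
  (L1.integralCLM' ℂ).comp (LpToLpRestrictCLM X E ℂ μ 1 A)

theorem setIntegralCLM_apply (A : Set X) (g : Lp E 1 μ) :
    setIntegralCLM μ A g = ∫ x in A, g x ∂μ := by
  rw [setIntegralCLM, ContinuousLinearMap.comp_apply, ← L1.integral_eq', L1.integral_eq_integral]
  exact integral_congr_ae (LpToLpRestrictCLM_coeFn ℂ A g)

end SetIntegral

section EmbeddedInL1

variable {X B : Type*} [MeasurableSpace X] {μ : Measure X} [NormedAddCommGroup B]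
  [NormedSpace ℂ B] (ι : B →L[ℂ] Lp ℂ 1 μ) {x : ℕ → B} {y : B}

theorem ae_nonneg_of_tendsto_cesaroMean (hx : ∀ k, 0 ≤ᵐ[μ] ι (x k))
    (h : Tendsto (cesaroMean ℂ x) atTop (𝓝 y)) : 0 ≤ᵐ[μ] ι y := by
  refine Complex.ae_nonneg_of_forall_setIntegral_nonneg (L1.integrable_coeFn _) fun A _ => ?_
  let φ := setIntegralCLM μ A ∘L ι
  have hφ : ∀ g, φ g = ∫ a in A, ι g a ∂μ := fun g => setIntegralCLM_apply A (ι g)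
  rw [← hφ]
  refine ge_of_tendsto' ((φ.continuous.tendsto y).comp h) fun n => ?_
  rw [Function.comp_apply, φ.map_cesaroMean]
  exact cesaroMean_nonneg (fun k => hφ _ ▸ integral_nonneg_of_ae (ae_restrict_of_ae (hx k))) n

theorem integral_eq_of_tendsto_cesaroMean {c : ℂ} (hx : ∀ k, ∫ a, ι (x k) a ∂μ = c)
    (h : Tendsto (cesaroMean ℂ x) atTop (𝓝 y)) : ∫ a, ι y a ∂μ = c := by
  let φ := setIntegralCLM μ Set.univ ∘L ι
  have hφ : ∀ g, φ g = ∫ a, ι g a ∂μ := fun g =>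
    (setIntegralCLM_apply Set.univ (ι g)).trans setIntegral_univ
  rw [← hφ]
  refine tendsto_nhds_unique ((φ.continuous.tendsto y).comp h) (tendsto_const_nhds.congr' ?_)
  filter_upwards [eventually_ne_atTop 0] with n hn
  rw [Function.comp_apply, φ.map_cesaroMean]
  simp only [hφ, hx]
  exact (cesaroMean_const c hn).symm

end EmbeddedInL1

theorem withDensity_ofReal_re_apply {X : Type*} [MeasurableSpace X] {μ : Measure X} [SFinite μ]
    {g : X → ℂ} (hg : Integrable g μ) (hpos : 0 ≤ᵐ[μ] g) (A : Set X) :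
    μ.withDensity (fun x => ENNReal.ofReal (g x).re) A = ENNReal.ofReal (∫ x in A, g x ∂μ).re := by
  have hre : 0 ≤ᵐ[μ.restrict A] fun x => (g x).re :=
    ae_restrict_of_ae (hpos.mono fun x hx => (Complex.nonneg_iff.1 hx).1)
  have hgre : Integrable (fun x => (g x).re) μ := hg.re
  rw [withDensity_apply', ← ofReal_integral_eq_lintegral_ofReal hgre.integrableOn hre]
  congr 1
  exact integral_re hg.integrableOn

section PerronFrobenius

variable {X B : Type*} [MeasurableSpace X] [NormedAddCommGroup B] [NormedSpace ℂ B]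

def IsPerronFrobenius (μ : Measure X) (T : X → X) (ι : B →L[ℂ] Lp ℂ 1 μ) (P : B →L[ℂ] B) :
    Prop :=
  ∀ (f : B) (A : Set X), MeasurableSet A →
    ∫ x in A, (ι (P f) : X → ℂ) x ∂μ = ∫ x in T ⁻¹' A, (ι f : X → ℂ) x ∂μ

namespace IsPerronFrobenius

variable {μ : Measure X} {T : X → X} {ι : B →L[ℂ] Lp ℂ 1 μ} {P : B →L[ℂ] B}
  (hP : IsPerronFrobenius μ T ι P)
include hP

theorem integral_pow_apply (n : ℕ) (f : B) :
    ∫ x, ι ((P ^ n) f) x ∂μ = ∫ x, ι f x ∂μ := by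
  induction n with
  | zero => rfl
  | succ n ih =>
    rw [pow_succ', mul_apply_eq_comp, ← ih, ← setIntegral_univ, hP _ _ .univ,
      Set.preimage_univ, setIntegral_univ]

theorem ae_nonneg_pow_apply {f : B} (hf : 0 ≤ᵐ[μ] ι f) (n : ℕ) : 0 ≤ᵐ[μ] ι ((P ^ n) f) := by
  induction n with
  | zero => exact hf
  | succ n ih =>
    rw [pow_succ', mul_apply_eq_comp]
    refine Complex.ae_nonneg_of_forall_setIntegral_nonneg (L1.integrable_coeFn _) fun A hA => ?_
    rw [hP _ A hA]
    exact integral_nonneg_of_ae (ae_restrict_of_ae ih)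

theorem withDensity_preimage_of_apply_eq_self [SFinite μ] {f : B} (hf : P f = f)
    (hpos : 0 ≤ᵐ[μ] ι f) {A : Set X} (hA : MeasurableSet A) :
    μ.withDensity (fun x => ENNReal.ofReal (ι f x).re) (T ⁻¹' A) =
      μ.withDensity (fun x => ENNReal.ofReal (ι f x).re) A := by
  rw [withDensity_ofReal_re_apply (L1.integrable_coeFn _) hpos,
    withDensity_ofReal_re_apply (L1.integrable_coeFn _) hpos, ← hP f A hA, hf]

end IsPerronFrobenius

end PerronFrobenius

theorem stmt_3_general {X : Type*} [MeasurableSpace X] (m : Measure X) [IsProbabilityMeasure m]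
    (T : X → X)
    -- B is a complex Banach space ...
    {B : Type*} [NormedAddCommGroup B] [NormedSpace ℂ B] [CompleteSpace B]
    -- ... continuously embedded in L¹(m)
    (ι : B →L[ℂ] Lp ℂ 1 m)
    -- P(B) ⊂ B and P restricted to B is bounded: PB is the restriction of the
    -- Perron-Frobenius operator to B
    (PB : B →L[ℂ] B)
    (hPB : ∀ (f : B) (A : Set X), MeasurableSet A →
        ∫ x in A, (ι (PB f) : X → ℂ) x ∂m = ∫ x in T ⁻¹' A, (ι f : X → ℂ) x ∂m)
    -- P is quasi-compact of diagonal type on B :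
    (s : ℕ) (lam : Fin s → ℂ) (hlam : ∀ i, ‖lam i‖ = 1)
    (Pr : Fin s → B →L[ℂ] B)
    (hproj : ∀ i, (Pr i).comp (Pr i) = Pr i)
    (horth : ∀ i j, i ≠ j → (Pr i).comp (Pr j) = 0)
    (Q : B →L[ℂ] B) (hQrad : spectralRadius ℂ (Q : B →L[ℂ] B) < 1)
    (hQPr : ∀ i, Q.comp (Pr i) = 0) (hPrQ : ∀ i, (Pr i).comp Q = 0)
    (hdecomp : PB = (∑ i, lam i • Pr i) + Q) :
    ∀ f : B, (∀ᵐ x ∂m, 0 ≤ ((ι f : X → ℂ) x).re ∧ ((ι f : X → ℂ) x).im = 0) →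
      (∫ x, (ι f : X → ℂ) x ∂m = 1) →
      ∃ fstar : B,
        -- Cesàro averages converge in B
        Tendsto (fun n : ℕ => (n : ℂ)⁻¹ • ∑ k ∈ Finset.range n, (PB ^ k) f)
          atTop (𝓝 fstar) ∧
        (∀ᵐ x ∂m, 0 ≤ ((ι fstar : X → ℂ) x).re ∧ ((ι fstar : X → ℂ) x).im = 0) ∧
        (∫ x, (ι fstar : X → ℂ) x ∂m = 1) ∧
        PB fstar = fstar ∧
        -- the associated measure μ_f is a T-invariant absolutely continuous probability
        (∃ μf : Measure X,
          μf = m.withDensity (fun x => ENNReal.ofReal ((ι fstar : X → ℂ) x).re) ∧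
          IsProbabilityMeasure μf ∧ μf ≪ m ∧
            ∀ A : Set X, MeasurableSet A → μf (T ⁻¹' A) = μf A) ∧
        -- 1 is an eigenvalue of P on B
        (∃ g : B, g ≠ 0 ∧ PB g = g) := by
  intro f hf hfint
  have hPF : IsPerronFrobenius m T ι PB := hPB
  have hPr : OrthogonalIdempotents Pr := ⟨hproj, horth⟩
  set fstar := ∑ i, if lam i = 1 then Pr i f else 0
  have hconv : Tendsto (cesaroMean ℂ fun k => (PB ^ k) f) atTop (𝓝 fstar) :=
    tendsto_cesaroMean_pow_apply hPr hQPr hdecomp hPrQ (fun i => (hlam i).le) hQrad f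
  have hfix : PB fstar = fstar := by
    simp only [fstar, map_sum, apply_ite PB, map_zero,
      apply_eq_smul_of_eq_sum_smul_add hPr hQPr hdecomp]
    exact Finset.sum_congr rfl fun i _ => by split_ifs with h <;> simp [h]
  have hf' : 0 ≤ᵐ[m] ι f := hf.mono fun x hx => Complex.nonneg_iff.2 ⟨hx.1, hx.2.symm⟩
  have hpos : 0 ≤ᵐ[m] ι fstar :=
    ae_nonneg_of_tendsto_cesaroMean ι (hPF.ae_nonneg_pow_apply hf') hconv
  have hint : ∫ x, ι fstar x ∂m = 1 :=
    integral_eq_of_tendsto_cesaroMean ι (fun k => (hPF.integral_pow_apply k f).trans hfint) hconv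
  refine ⟨fstar, hconv, hpos.mono fun x hx => ?_, hint, hfix, ⟨_, rfl, ⟨?_⟩,
    withDensity_absolutelyContinuous _ _,
    fun A hA => hPF.withDensity_preimage_of_apply_eq_self hfix hpos hA⟩, fstar, ?_, hfix⟩
  · exact ⟨(Complex.nonneg_iff.1 hx).1, (Complex.nonneg_iff.1 hx).2.symm⟩
  · rw [withDensity_ofReal_re_apply (L1.integrable_coeFn _) hpos, setIntegral_univ, hint]
    simp
  · intro h0
    rw [h0, map_zero, integral_congr_ae (Lp.coeFn_zero ℂ 1 m)] at hint
    simp at hint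

/-- If the Perron–Frobenius operator is quasi-compact of diagonal type on a
Banach space `B ⊂ L¹(m)` (containing the constants, continuously embedded, stable under `P`,
with spectral radius one), then the Cesàro averages of `Pⁿf` of any nonnegative normalized
`f ∈ B` converge in `B` to a fixed density `f*`, yielding a `T`-invariant absolutely continuous
probability measure; in particular `1` is an eigenvalue of `P` on `B`. -/
theorem stmt_3 {X : Type*} [MeasurableSpace X] (m : Measure X) [IsProbabilityMeasure m]
    (T : X → X) (hT : Measurable T)
    (hns : ∀ A : Set X, MeasurableSet A → m A = 0 → m (T ⁻¹' A) = 0)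
    -- B is a complex Banach space ...
    {B : Type*} [NormedAddCommGroup B] [NormedSpace ℂ B] [CompleteSpace B]
    -- ... continuously embedded in L¹(m)
    (ι : B →L[ℂ] Lp ℂ 1 m) (hι : Function.Injective ι)
    -- constant functions lie in B
    (oneB : B) (honeB : ∀ᵐ x ∂m, (ι oneB : X → ℂ) x = 1)
    -- P(B) ⊂ B and P restricted to B is bounded: PB is the restriction of the
    -- Perron-Frobenius operator to B
    (PB : B →L[ℂ] B)
    (hPB : ∀ (f : B) (A : Set X), MeasurableSet A →
        ∫ x in A, (ι (PB f) : X → ℂ) x ∂m = ∫ x in T ⁻¹' A, (ι f : X → ℂ) x ∂m)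
    -- spectral radius of P on B is one
    (hrad : spectralRadius ℂ (PB : B →L[ℂ] B) = 1)
    -- P is quasi-compact of diagonal type on B :
    (s : ℕ) (lam : Fin s → ℂ) (hlam : ∀ i, ‖lam i‖ = 1)
    (Pr : Fin s → B →L[ℂ] B)
    (hproj : ∀ i, (Pr i).comp (Pr i) = Pr i)
    (hfinrank : ∀ i, FiniteDimensional ℂ (LinearMap.range (Pr i : B →ₗ[ℂ] B)))
    (horth : ∀ i j, i ≠ j → (Pr i).comp (Pr j) = 0)
    (Q : B →L[ℂ] B) (hQrad : spectralRadius ℂ (Q : B →L[ℂ] B) < 1)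
    (hQPr : ∀ i, Q.comp (Pr i) = 0) (hPrQ : ∀ i, (Pr i).comp Q = 0)
    (hdecomp : PB = (∑ i, lam i • Pr i) + Q) :
    ∀ f : B, (∀ᵐ x ∂m, 0 ≤ ((ι f : X → ℂ) x).re ∧ ((ι f : X → ℂ) x).im = 0) →
      (∫ x, (ι f : X → ℂ) x ∂m = 1) →
      ∃ fstar : B,
        -- Cesàro averages converge in B
        Tendsto (fun n : ℕ => (n : ℂ)⁻¹ • ∑ k ∈ Finset.range n, (PB ^ k) f)
          atTop (𝓝 fstar) ∧
        (∀ᵐ x ∂m, 0 ≤ ((ι fstar : X → ℂ) x).re ∧ ((ι fstar : X → ℂ) x).im = 0) ∧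
        (∫ x, (ι fstar : X → ℂ) x ∂m = 1) ∧
        PB fstar = fstar ∧
        -- the associated measure μ_f is a T-invariant absolutely continuous probability
        (∃ μf : Measure X,
          μf = m.withDensity (fun x => ENNReal.ofReal ((ι fstar : X → ℂ) x).re) ∧
          IsProbabilityMeasure μf ∧ μf ≪ m ∧
            ∀ A : Set X, MeasurableSet A → μf (T ⁻¹' A) = μf A) ∧
        -- 1 is an eigenvalue of P on B
        (∃ g : B, g ≠ 0 ∧ PB g = g) :=
  stmt_3_general m T ι PB hPB s lam hlam Pr hproj horth Q hQrad hQPr hPrQ hdecomp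
end

section
/- Under the spectral gap assumption on P (1 is a simple eigenvalue and the only eigenvalue of modulus 1, so Pf = ⟨m,f⟩v + Qf on B with Q of spectral radius < 1), there exist C ≥ 0 and 0 ≤ λ < 1 such that for every f ∈ B and every g ∈ L^∞(μ), |∫ f·(g∘Tⁿ) dμ − ∫ f dμ · ∫ g dμ| ≤ C λⁿ ‖f‖_B ‖g‖_{L^∞(μ)} for all n ≥ 1. -/
open MeasureTheory Filter Topology
open scoped ENNReal

/-!
Put `h = f v`. Duality for the transfer operator turns `∫ f (g ∘ Tⁿ) dμ = ∫ h (g ∘ Tⁿ) dm` into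
`∫ (Pⁿ h) g dm`, and `Pⁿ h = (∫ h dm) v + Qⁿ h` for `n ≥ 1`; the first term contributes exactly
`∫ f dμ ∫ g dμ`, the second is at most `‖Qⁿ‖ ‖h‖ ‖g‖_∞`, and Gelfand's formula gives
`‖Qⁿ‖ ≤ C λⁿ` with `λ < 1`. Duality needs a bounded measurable `g`; since `μ` is `T`-invariant,
replacing `g` by such a representative changes neither side.
-/

theorem exists_norm_pow_le_mul_pow_of_spectralRadius_lt_one {A : Type*} [NormedRing A]
    [NormedAlgebra ℂ A] [CompleteSpace A] {a : A} (ha : spectralRadius ℂ a < 1) :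
    ∃ C : ℝ, 0 ≤ C ∧ ∃ l : ℝ, 0 ≤ l ∧ l < 1 ∧ ∀ n : ℕ, ‖a ^ n‖ ≤ C * l ^ n := by
  obtain ⟨r, har, hr1⟩ := ENNReal.lt_iff_exists_nnreal_btwn.mp ha
  have hev : ∀ᶠ n : ℕ in atTop, |‖a ^ n‖| ≤ (r : ℝ) ^ n := by
    have hgelfand := spectrum.pow_nnnorm_pow_one_div_tendsto_nhds_spectralRadius a
    filter_upwards [hgelfand.eventually_lt_const har, eventually_ge_atTop 1] with n hn hn1
    have hpos : (0 : ℝ) < n := by exact_mod_cast hn1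
    rw [one_div, ENNReal.rpow_inv_lt_iff hpos, ENNReal.rpow_natCast] at hn
    rw [abs_norm, ← coe_nnnorm, ← NNReal.coe_pow, NNReal.coe_le_coe]
    exact_mod_cast hn.le
  obtain ⟨l, hl, C, hC, hCl⟩ := ((TFAE_exists_lt_isLittleO_pow (fun n => ‖a ^ n‖) 1).out 6 5).mp
    (show ∃ l < (1 : ℝ), ∀ᶠ n in atTop, |‖a ^ n‖| ≤ l ^ n from ⟨r, by exact_mod_cast hr1, hev⟩)
  exact ⟨C, hC.le, l, hl.1.le, hl.2, fun n => (le_abs_self _).trans (hCl n)⟩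

theorem Module.End.pow_succ_apply_eq_smul_add {R M : Type*} [Semiring R] [AddCommMonoid M]
    [Module R M] {P Q : Module.End R M} {φ : M → R} {v : M} (hv : P v = v)
    (hφQ : ∀ b, φ (Q b) = 0) (hP : ∀ b, P b = φ b • v + Q b) (n : ℕ) (b : M) :
    (P ^ (n + 1)) b = φ b • v + (Q ^ (n + 1)) b := by
  induction n with
  | zero => simpa using hP b
  | succ n ih =>
    have hφQn : φ ((Q ^ (n + 1)) b) = 0 := by rw [pow_succ', Module.End.mul_apply, hφQ]
    rw [pow_succ', Module.End.mul_apply, ih, map_add, map_smul, hv, hP, hφQn, zero_smul, zero_add,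
      ← Module.End.mul_apply, ← pow_succ']

section Transfer

variable {X : Type*} [MeasurableSpace X] {m : Measure X} {T : X → X} {φ ψ : X → ℂ}

theorem integral_mul_simpleFunc_eq_integral_mul_comp (hT : Measurable T) (hφ : Integrable φ m)
    (hψ : Integrable ψ m)
    (h : ∀ A, MeasurableSet A → ∫ x in A, ψ x ∂m = ∫ x in T ⁻¹' A, φ x ∂m) (s : SimpleFunc X ℂ) :
    ∫ x, ψ x * s x ∂m = ∫ x, φ x * s (T x) ∂m := by
  have hint (s : SimpleFunc X ℂ) :
      Integrable (fun x => ψ x * s x) m ∧ Integrable (fun x => φ x * s (T x)) m :=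
    ⟨hψ.mul_of_top_left (s.memLp_top m), hφ.mul_of_top_left ((s.comp T hT).memLp_top m)⟩
  induction s using SimpleFunc.induction with
  | @const c A hA =>
    classical
    simp only [SimpleFunc.coe_piecewise, SimpleFunc.coe_const]
    have hψA : (fun x => ψ x * A.piecewise (Function.const X c) (Function.const X 0) x)
        = A.indicator (ψ · * c) := by
      ext x; by_cases hx : x ∈ A <;> simp [hx]
    have hφA : (fun x => φ x * A.piecewise (Function.const X c) (Function.const X 0) (T x))
        = (T ⁻¹' A).indicator (φ · * c) := by
      ext x; by_cases hx : T x ∈ A <;> simp [hx]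
    rw [hψA, hφA, integral_indicator hA, integral_indicator (hT hA), integral_mul_const,
      integral_mul_const, h A hA]
  | @add s₁ s₂ _ ih₁ ih₂ =>
    simp only [SimpleFunc.coe_add, Pi.add_apply, mul_add]
    rw [integral_add (hint s₁).1 (hint s₂).1, integral_add (hint s₁).2 (hint s₂).2, ih₁, ih₂]

theorem integral_mul_eq_integral_mul_comp (hT : Measurable T) (hφ : Integrable φ m)
    (hψ : Integrable ψ m)
    (h : ∀ A, MeasurableSet A → ∫ x in A, ψ x ∂m = ∫ x in T ⁻¹' A, φ x ∂m) {g : X → ℂ}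
    (hg : Measurable g) {M : ℝ} (hgM : ∀ x, ‖g x‖ ≤ M) :
    ∫ x, ψ x * g x ∂m = ∫ x, φ x * g (T x) ∂m := by
  let s : ℕ → SimpleFunc X ℂ := SimpleFunc.approxOn g hg Set.univ 0 (Set.mem_univ 0)
  have hs_bound (n : ℕ) (x : X) : ‖s n x‖ ≤ 2 * M := by
    linarith [SimpleFunc.norm_approxOn_zero_le hg (Set.mem_univ 0) x n, hgM x]
  have hs_lim (x : X) : Tendsto (fun n => s n x) atTop (𝓝 (g x)) :=
    SimpleFunc.tendsto_approxOn hg (Set.mem_univ 0) (by simp)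
  have hlim {F : X → ℂ} (hF : Integrable F m) {S : X → X} (hS : Measurable S) :
      Tendsto (fun n => ∫ x, F x * s n (S x) ∂m) atTop (𝓝 (∫ x, F x * g (S x) ∂m)) := by
    refine tendsto_integral_of_dominated_convergence (fun x => ‖F x‖ * (2 * M))
      (fun n => hF.1.mul ((s n).measurable.comp hS).aestronglyMeasurable) (hF.norm.mul_const _)
      (fun n => ae_of_all _ fun x => ?_) (ae_of_all _ fun x => (hs_lim (S x)).const_mul _)
    rw [norm_mul]
    exact mul_le_mul_of_nonneg_left (hs_bound n (S x)) (norm_nonneg _)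
  exact tendsto_nhds_unique ((hlim hψ measurable_id).congr fun n =>
    integral_mul_simpleFunc_eq_integral_mul_comp hT hφ hψ h (s n)) (hlim hφ hT)

end Transfer

section Density

variable {X : Type*} [MeasurableSpace X] {m : Measure X} {u : X → ℂ}

theorem integral_withDensity_re_eq_integral_mul (hu : Integrable u m)
    (hu0 : ∀ᵐ x ∂m, 0 ≤ (u x).re ∧ (u x).im = 0) (F : X → ℂ) :
    ∫ x, F x ∂m.withDensity (fun x => ENNReal.ofReal (u x).re) = ∫ x, u x * F x ∂m := by
  have hu_re : Integrable (fun x => (u x).re) m := hu.re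
  rw [integral_withDensity_eq_integral_toReal_smul₀ hu_re.aemeasurable.ennreal_ofReal
    (ae_of_all _ fun _ => ENNReal.ofReal_lt_top)]
  refine integral_congr_ae ?_
  filter_upwards [hu0] with x hx
  rw [ENNReal.toReal_ofReal hx.1, Complex.real_smul]
  congr 1
  exact Complex.ext rfl (by simpa using hx.2.symm)

theorem measurePreserving_withDensity_re {T : X → X} (hT : Measurable T) (hu : Integrable u m)
    (hu0 : 0 ≤ᵐ[m] fun x => (u x).re)
    (h : ∀ A, MeasurableSet A → ∫ x in A, u x ∂m = ∫ x in T ⁻¹' A, u x ∂m) :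
    MeasurePreserving T (m.withDensity fun x => ENNReal.ofReal (u x).re)
      (m.withDensity fun x => ENNReal.ofReal (u x).re) := by
  have hu_re : Integrable (fun x => (u x).re) m := hu.re
  have hre (S : Set X) : ∫ x in S, (u x).re ∂m = (∫ x in S, u x ∂m).re := integral_re hu.restrict
  refine ⟨hT, Measure.ext fun A hA => ?_⟩
  rw [Measure.map_apply hT hA, withDensity_apply _ hA, withDensity_apply _ (hT hA),
    ← ofReal_integral_eq_lintegral_ofReal hu_re.restrict (ae_restrict_of_ae hu0),
    ← ofReal_integral_eq_lintegral_ofReal hu_re.restrict (ae_restrict_of_ae hu0), hre, hre, h A hA]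

end Density

theorem MeasureTheory.MemLp.exists_stronglyMeasurable_norm_le_ae_eq {X E : Type*}
    [MeasurableSpace X] {μ : Measure X} [NormedAddCommGroup E] {g : X → E} (hg : MemLp g ∞ μ) :
    ∃ g' : X → E, StronglyMeasurable g' ∧ (∀ x, ‖g' x‖ ≤ (eLpNorm g ∞ μ).toReal) ∧ g =ᵐ[μ] g' := by
  have hgM : ∀ᵐ x ∂μ, ‖g x‖ ≤ (eLpNorm g ∞ μ).toReal := by
    rw [toReal_eLpNorm hg.aestronglyMeasurable]
    exact ae_le_lpNorm_exponent_top hg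
  let g₀ := hg.aestronglyMeasurable.mk g
  have hg₀ : StronglyMeasurable g₀ := hg.aestronglyMeasurable.stronglyMeasurable_mk
  refine ⟨{x | ‖g₀ x‖ ≤ (eLpNorm g ∞ μ).toReal}.indicator g₀,
    hg₀.indicator (measurableSet_le hg₀.norm.measurable measurable_const), fun x => ?_, ?_⟩
  · rw [Set.indicator_apply]
    split_ifs with hx
    · exact hx
    · simp
  · filter_upwards [hg.aestronglyMeasurable.ae_eq_mk, hgM] with x hx hxM
    rw [hx] at hxM ⊢
    exact (Set.indicator_of_mem (s := {x | ‖g₀ x‖ ≤ _}) hxM g₀).symm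

theorem norm_integral_mul_le_norm_mul {X : Type*} [MeasurableSpace X] {m : Measure X}
    (u : Lp ℂ 1 m) {g : X → ℂ} {M : ℝ} (hgM : ∀ᵐ x ∂m, ‖g x‖ ≤ M) :
    ‖∫ x, u x * g x ∂m‖ ≤ ‖u‖ * M := by
  calc ‖∫ x, u x * g x ∂m‖ ≤ ∫ x, ‖u x‖ * M ∂m := by
        refine norm_integral_le_of_norm_le ((L1.integrable_coeFn u).norm.mul_const M) ?_
        filter_upwards [hgM] with x hx
        rw [norm_mul]
        exact mul_le_mul_of_nonneg_left hx (norm_nonneg _)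
    _ = ‖u‖ * M := by rw [integral_mul_const, L1.norm_eq_integral_norm]

section TransferOperator

variable {X : Type*} [MeasurableSpace X] {m : Measure X} {T : X → X}
  {B : Type*} [NormedAddCommGroup B] [NormedSpace ℂ B] {ι : B →L[ℂ] Lp ℂ 1 m} {P : B →L[ℂ] B}

theorem setIntegral_pow_apply_eq_setIntegral_preimage_iterate (hT : Measurable T)
    (hP : ∀ (f : B) (A : Set X), MeasurableSet A →
      ∫ x in A, (ι (P f) : X → ℂ) x ∂m = ∫ x in T ⁻¹' A, (ι f : X → ℂ) x ∂m)
    (n : ℕ) (f : B) {A : Set X} (hA : MeasurableSet A) :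
    ∫ x in A, (ι ((P ^ n) f) : X → ℂ) x ∂m = ∫ x in T^[n] ⁻¹' A, (ι f : X → ℂ) x ∂m := by
  induction n generalizing f with
  | zero => simp
  | succ n ih =>
    rw [pow_succ, mul_apply_eq_comp, ih, hP _ _ (hT.iterate n hA),
      Function.iterate_succ, Set.preimage_comp]

theorem integral_mul_comp_iterate_sub_eq (hT : Measurable T)
    (hP : ∀ (f : B) (A : Set X), MeasurableSet A →
      ∫ x in A, (ι (P f) : X → ℂ) x ∂m = ∫ x in T ⁻¹' A, (ι f : X → ℂ) x ∂m)
    {v : B} (hv : P v = v) {Q : B →L[ℂ] B} (hQ : ∀ f, ∫ x, (ι (Q f) : X → ℂ) x ∂m = 0)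
    (hPQ : ∀ f, P f = (∫ x, (ι f : X → ℂ) x ∂m) • v + Q f)
    {g : X → ℂ} (hg : Measurable g) {M : ℝ} (hgM : ∀ x, ‖g x‖ ≤ M) (f : B) (n : ℕ) :
    ∫ x, (ι f : X → ℂ) x * g (T^[n + 1] x) ∂m
        - (∫ x, (ι f : X → ℂ) x ∂m) * ∫ x, (ι v : X → ℂ) x * g x ∂m
      = ∫ x, (ι ((Q ^ (n + 1)) f) : X → ℂ) x * g x ∂m := by
  have hint (u : B) : Integrable (fun x => (ι u : X → ℂ) x * g x) m :=
    (L1.integrable_coeFn (ι u)).mul_bdd hg.aestronglyMeasurable (ae_of_all _ hgM)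
  have hdual : ∫ x, (ι f : X → ℂ) x * g (T^[n + 1] x) ∂m
      = ∫ x, (ι ((P ^ (n + 1)) f) : X → ℂ) x * g x ∂m :=
    (integral_mul_eq_integral_mul_comp (hT.iterate _) (L1.integrable_coeFn _)
      (L1.integrable_coeFn _)
      (fun A hA => setIntegral_pow_apply_eq_setIntegral_preimage_iterate hT hP _ f hA) hg hgM).symm
  have hsplit : (P ^ (n + 1)) f = (∫ x, (ι f : X → ℂ) x ∂m) • v + (Q ^ (n + 1)) f := by
    have := Module.End.pow_succ_apply_eq_smul_add (P := (P : Module.End ℂ B)) (Q := Q) hv hQ hPQ n f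
    simpa only [pow_apply_eq_iterate, Module.End.coe_pow, ContinuousLinearMap.coe_coe] using this
  set c := ∫ x, (ι f : X → ℂ) x ∂m
  have hae : (fun x => (ι ((P ^ (n + 1)) f) : X → ℂ) x * g x) =ᵐ[m]
      fun x => c * ((ι v : X → ℂ) x * g x) + (ι ((Q ^ (n + 1)) f) : X → ℂ) x * g x := by
    rw [hsplit, map_add, map_smul]
    filter_upwards [Lp.coeFn_add (c • ι v) (ι ((Q ^ (n + 1)) f)), Lp.coeFn_smul c (ι v)]
      with x hadd hsmul
    rw [hadd, Pi.add_apply, hsmul, Pi.smul_apply, smul_eq_mul]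
    ring
  rw [hdual, integral_congr_ae hae, integral_add ((hint v).const_mul _) (hint _),
    integral_const_mul]
  ring

end TransferOperator

theorem stmt_4_general
    {X : Type*} [MeasurableSpace X] (m : Measure X)
    (T : X → X) (hT : Measurable T)
    -- B is a complex Banach space continuously embedded in L¹(m)
    {B : Type*} [NormedAddCommGroup B] [NormedSpace ℂ B] [CompleteSpace B]
    (ι : B →L[ℂ] Lp ℂ 1 m)
    -- B is a Banach algebra : mulB is the pointwise multiplication, a continuous
    -- bilinear map (hence ∃ C > 0, ‖f*g‖_B ≤ C ‖f‖_B ‖g‖_B with C = ‖mulB‖)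
    (mulB : B →L[ℂ] B →L[ℂ] B)
    (hmulB : ∀ f g : B, ∀ᵐ x ∂m,
        (ι (mulB f g) : X → ℂ) x = (ι f : X → ℂ) x * (ι g : X → ℂ) x)
    -- P(B) ⊂ B and P restricted to B is bounded : PB is the restriction to B of the
    -- Perron-Frobenius operator P f = d m_f / dm, m_f (A) = ∫_{T⁻¹A} f dm
    (PB : B →L[ℂ] B)
    (hPB : ∀ (f : B) (A : Set X), MeasurableSet A →
        ∫ x in A, (ι (PB f) : X → ℂ) x ∂m = ∫ x in T ⁻¹' A, (ι f : X → ℂ) x ∂m)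
    -- spectral gap : 1 is a simple eigenvalue of P on B and the only eigenvalue of
    -- modulus 1, so P f = ⟨m,f⟩ v + Q f with v the invariant density and Q of
    -- spectral radius < 1, Q v = 0, ⟨m, Q f⟩ = 0
    (v : B) (hv0 : ∀ᵐ x ∂m, 0 ≤ ((ι v : X → ℂ) x).re ∧ ((ι v : X → ℂ) x).im = 0)
    (hvfix : PB v = v)
    (Q : B →L[ℂ] B) (hQrad : spectralRadius ℂ (Q : B →L[ℂ] B) < 1)
    (hQm : ∀ f : B, ∫ x, (ι (Q f) : X → ℂ) x ∂m = 0)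
    (hdecomp : ∀ f : B, PB f = (∫ x, (ι f : X → ℂ) x ∂m) • v + Q f)
    -- μ = v · m is the unique T-invariant a.c.i.p. with density in B
    (μ : Measure X)
    (hμ : μ = m.withDensity fun x => ENNReal.ofReal ((ι v : X → ℂ) x).re)
    :
    ∃ C₀ : ℝ, 0 ≤ C₀ ∧ ∃ l : ℝ, 0 ≤ l ∧ l < 1 ∧
      ∀ f : B, ∀ g : X → ℂ, MemLp g ⊤ μ → ∀ n : ℕ, 1 ≤ n →
        ‖(∫ x, (ι f : X → ℂ) x * g (T^[n] x) ∂μ) -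
            (∫ x, (ι f : X → ℂ) x ∂μ) * ∫ x, g x ∂μ‖
          ≤ C₀ * l ^ n * ‖f‖ * (eLpNorm g ⊤ μ).toReal := by
  obtain ⟨C, hC, l, hl0, hl1, hQn⟩ := exists_norm_pow_le_mul_pow_of_spectralRadius_lt_one hQrad
  refine ⟨C * ‖ι‖ * ‖mulB‖ * ‖v‖, by positivity, l, hl0, hl1, fun f g hg n hn => ?_⟩
  obtain ⟨n, rfl⟩ := Nat.exists_eq_add_of_le' hn
  have hv : Integrable (ι v : X → ℂ) m := L1.integrable_coeFn (ι v)
  have hμ_integral (F : X → ℂ) : ∫ x, F x ∂μ = ∫ x, (ι v : X → ℂ) x * F x ∂m :=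
    hμ ▸ integral_withDensity_re_eq_integral_mul hv hv0 F
  have hμT : MeasurePreserving T μ μ :=
    hμ ▸ measurePreserving_withDensity_re hT hv (hv0.mono fun _ hx => hx.1) fun A hA => by
      simpa only [hvfix] using hPB v A hA
  obtain ⟨g', hg', hg'M, hgg'⟩ := hg.exists_stronglyMeasurable_norm_le_ae_eq
  have hμ_f (F : X → ℂ) :
      ∫ x, (ι f : X → ℂ) x * F x ∂μ = ∫ x, (ι (mulB f v) : X → ℂ) x * F x ∂m := by
    rw [hμ_integral]
    refine integral_congr_ae ?_
    filter_upwards [hmulB f v] with x hx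
    rw [hx]
    ring
  have hcomp : (fun x => g (T^[n + 1] x)) =ᵐ[μ] fun x => g' (T^[n + 1] x) :=
    (hμT.iterate (n + 1)).quasiMeasurePreserving.ae_eq_comp hgg'
  have hmean_f : ∫ x, (ι f : X → ℂ) x ∂μ = ∫ x, (ι (mulB f v) : X → ℂ) x ∂m := by
    simpa using hμ_f fun _ => 1
  rw [integral_congr_ae (hcomp.mono fun x hx => congrArg _ hx), hμ_f, hmean_f,
    integral_congr_ae hgg', hμ_integral,
    integral_mul_comp_iterate_sub_eq hT hPB hvfix hQm hdecomp hg'.measurable hg'M (mulB f v) n]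
  calc _ ≤ ‖ι ((Q ^ (n + 1)) (mulB f v))‖ * (eLpNorm g ⊤ μ).toReal :=
        norm_integral_mul_le_norm_mul _ (ae_of_all _ hg'M)
    _ ≤ ‖ι‖ * (C * l ^ (n + 1) * (‖mulB‖ * ‖f‖ * ‖v‖)) * (eLpNorm g ⊤ μ).toReal := by
        gcongr
        refine (ι.le_opNorm _).trans (mul_le_mul_of_nonneg_left ?_ (norm_nonneg _))
        exact ((Q ^ (n + 1)).le_opNorm _).trans
          (mul_le_mul (hQn _) (mulB.le_opNorm₂ f v) (by positivity) (by positivity))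
    _ = _ := by ring

/-- Exponential decay of correlations under the spectral gap assumption :
`|∫ f (g∘Tⁿ) dμ − ∫ f dμ ∫ g dμ| ≤ C λⁿ ‖f‖_B ‖g‖_{L^∞(μ)}`. -/
theorem stmt_4
    {X : Type*} [MeasurableSpace X] (m : Measure X) [IsProbabilityMeasure m]
    (T : X → X) (hT : Measurable T)
    (hns : ∀ A : Set X, MeasurableSet A → m A = 0 → m (T ⁻¹' A) = 0)
    -- B is a complex Banach space continuously embedded in L¹(m)
    {B : Type*} [NormedAddCommGroup B] [NormedSpace ℂ B] [CompleteSpace B]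
    (ι : B →L[ℂ] Lp ℂ 1 m) (hι : Function.Injective ι)
    -- constant functions lie in B
    (oneB : B) (honeB : ∀ᵐ x ∂m, (ι oneB : X → ℂ) x = 1)
    -- B is a Banach algebra : mulB is the pointwise multiplication, a continuous
    -- bilinear map (hence ∃ C > 0, ‖f*g‖_B ≤ C ‖f‖_B ‖g‖_B with C = ‖mulB‖)
    (mulB : B →L[ℂ] B →L[ℂ] B)
    (hmulB : ∀ f g : B, ∀ᵐ x ∂m,
        (ι (mulB f g) : X → ℂ) x = (ι f : X → ℂ) x * (ι g : X → ℂ) x)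
    -- B is a complex Banach lattice : stable under conjugation and modulus
    (conjB : B → B)
    (hconjB : ∀ f : B, ∀ᵐ x ∂m, (ι (conjB f) : X → ℂ) x = starRingEnd ℂ ((ι f : X → ℂ) x))
    (absB : B → B)
    (habsB : ∀ f : B, ∀ᵐ x ∂m,
        (ι (absB f) : X → ℂ) x = ((‖(ι f : X → ℂ) x‖ : ℝ) : ℂ))
    -- P(B) ⊂ B and P restricted to B is bounded : PB is the restriction to B of the
    -- Perron-Frobenius operator P f = d m_f / dm, m_f (A) = ∫_{T⁻¹A} f dm
    (PB : B →L[ℂ] B)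
    (hPB : ∀ (f : B) (A : Set X), MeasurableSet A →
        ∫ x in A, (ι (PB f) : X → ℂ) x ∂m = ∫ x in T ⁻¹' A, (ι f : X → ℂ) x ∂m)
    -- the spectral radius of P on B is 1
    (hrad : spectralRadius ℂ (PB : B →L[ℂ] B) = 1)
    -- spectral gap : 1 is a simple eigenvalue of P on B and the only eigenvalue of
    -- modulus 1, so P f = ⟨m,f⟩ v + Q f with v the invariant density and Q of
    -- spectral radius < 1, Q v = 0, ⟨m, Q f⟩ = 0
    (v : B) (hv0 : ∀ᵐ x ∂m, 0 ≤ ((ι v : X → ℂ) x).re ∧ ((ι v : X → ℂ) x).im = 0)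
    (hv1 : ∫ x, (ι v : X → ℂ) x ∂m = 1) (hvfix : PB v = v)
    (Q : B →L[ℂ] B) (hQrad : spectralRadius ℂ (Q : B →L[ℂ] B) < 1)
    (hQv : Q v = 0) (hQm : ∀ f : B, ∫ x, (ι (Q f) : X → ℂ) x ∂m = 0)
    (hdecomp : ∀ f : B, PB f = (∫ x, (ι f : X → ℂ) x ∂m) • v + Q f)
    -- μ = v · m is the unique T-invariant a.c.i.p. with density in B
    (μ : Measure X)
    (hμ : μ = m.withDensity fun x => ENNReal.ofReal ((ι v : X → ℂ) x).re)
    :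
    ∃ C₀ : ℝ, 0 ≤ C₀ ∧ ∃ l : ℝ, 0 ≤ l ∧ l < 1 ∧
      ∀ f : B, ∀ g : X → ℂ, MemLp g ⊤ μ → ∀ n : ℕ, 1 ≤ n →
        ‖(∫ x, (ι f : X → ℂ) x * g (T^[n] x) ∂μ) -
            (∫ x, (ι f : X → ℂ) x ∂μ) * ∫ x, g x ∂μ‖
          ≤ C₀ * l ^ n * ‖f‖ * (eLpNorm g ⊤ μ).toReal :=
  stmt_4_general m T hT ι mulB hmulB PB hPB v hv0 hvfix Q hQrad hQm hdecomp μ hμ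
end

section
/- (Proposition 2.) In the setting of Proposition 1, there exists 0 < θ₁ < θ₀ such that for every real θ with |θ| < θ₁, the leading eigenvalue satisfies λ(θ) > 0. Moreover, one may replace v(z) and φ(z) by ṽ(z) = ⟨φ(z), 𝟙⟩ v(z) and φ̃(z) = ⟨φ(z), 𝟙⟩⁻¹ φ(z) (for z in a possibly smaller disc, where ⟨φ(z), 𝟙⟩ ≠ 0), which are again holomorphic in z and satisfy all conclusions of Proposition 1, and which in addition satisfy, for every real θ with |θ| < θ₁: ṽ(θ) ≥ 0 m-a.e., and φ̃(θ) is a positive linear functional (⟨φ̃(θ), f⟩ ≥ 0 whenever f ∈ B with f ≥ 0 m-a.e.). -/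
/-!
For real `θ` the twisted operator `P_θ f = P(e^{θφ} f)` preserves the cone of a.e. nonnegative
functions, and the spectral decomposition gives `λ(θ)⁻ⁿ P_θⁿ f → ⟨φ(θ), f⟩ v(θ)` in `B`, because
`‖Q(θ)ⁿ‖ ≤ C rⁿ` with `r < |λ(θ)|`. The nonnegative numbers `uₙ = ∫ P_θⁿ 𝟙 dm` therefore satisfy
`uₙ / λⁿ → a(θ) = ⟨φ(θ), 𝟙⟩ ∫ v(θ) dm`, and `a(θ)` is close to `a(0) = 1`, so nonzero, for small
`θ`. Hence `uₙ₊₁ / uₙ → λ(θ)`, which forces `λ(θ) > 0`. Then `λ(θ)⁻ⁿ P_θⁿ f ≥ 0` for `f ≥ 0`, and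
so is its limit `⟨φ(θ), f⟩ v(θ)`, the cone being closed in `L¹`. Integrating, `⟨φ̃(θ), f⟩` is the
quotient of the nonnegative numbers `⟨φ(θ), f⟩ ∫ v(θ) dm` and `a(θ)`.
-/

open MeasureTheory Filter Topology
open scoped ComplexOrder ENNReal

theorem Set.MapsTo.pow {F α : Type*} [FunLike F α α] [Monoid F] [IsMulApplyEqComp F α]
    [IsOneApplyEqSelf F α] {P : F} {s : Set α} (hP : Set.MapsTo P s s) (n : ℕ) :
    Set.MapsTo ⇑(P ^ n) s s := by
  rw [FunLike.coe_pow_eq_iterate]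
  exact hP.iterate n

structure IsSpectralDecomposition {𝕜 E : Type*} [NormedField 𝕜] [NormedAddCommGroup E]
    [NormedSpace 𝕜 E] (P : E →L[𝕜] E) (L : 𝕜) (p : E →L[𝕜] 𝕜) (w : E) (Q : E →L[𝕜] E) :
    Prop where
  apply_eq : ∀ f, P f = (L * p f) • w + Q f
  map_eigenvector : p w = 1
  apply_eigenvector : Q w = 0
  comp_eq_zero : p.comp Q = 0

section SpectralDecomposition

variable {𝕜 E : Type*} [NontriviallyNormedField 𝕜] [NormedAddCommGroup E] [NormedSpace 𝕜 E]
  {P Q : E →L[𝕜] E} {L : 𝕜} {p : E →L[𝕜] 𝕜} {w : E}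

theorem tendsto_inv_pow_smul_pow_apply_zero {C r : ℝ} (hr : 0 ≤ r) (hrL : r < ‖L‖)
    (hQ : ∀ n, ‖Q ^ n‖ ≤ C * r ^ n) (f : E) :
    Tendsto (fun n ↦ (L ^ n)⁻¹ • (Q ^ n) f) atTop (𝓝 0) := by
  have hL : 0 < ‖L‖ := hr.trans_lt hrL
  have hbound : ∀ n, ‖(L ^ n)⁻¹ • (Q ^ n) f‖ ≤ C * ‖f‖ * (r / ‖L‖) ^ n := fun n ↦
    calc ‖(L ^ n)⁻¹ • (Q ^ n) f‖ = (‖L‖ ^ n)⁻¹ * ‖(Q ^ n) f‖ := by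
          rw [norm_smul, norm_inv, norm_pow]
      _ ≤ (‖L‖ ^ n)⁻¹ * (C * r ^ n * ‖f‖) := by
          gcongr
          exact (Q ^ n).le_of_opNorm_le (hQ n) f
      _ = C * ‖f‖ * (r / ‖L‖) ^ n := by
          rw [div_pow]
          field_simp
  have hgeom : Tendsto (fun n ↦ C * ‖f‖ * (r / ‖L‖) ^ n) atTop (𝓝 0) := by
    simpa using (tendsto_pow_atTop_nhds_zero_of_lt_one (by positivity)
      ((div_lt_one hL).2 hrL)).const_mul (C * ‖f‖)
  exact squeeze_zero_norm hbound hgeom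

namespace IsSpectralDecomposition

theorem rescale (h : IsSpectralDecomposition P L p w Q) {c : 𝕜} (hc : c ≠ 0) :
    IsSpectralDecomposition P L (c⁻¹ • p) (c • w) Q where
  apply_eq f := by
    rw [h.apply_eq, smul_apply, smul_smul, smul_eq_mul, mul_assoc, mul_comm c⁻¹, mul_assoc,
      inv_mul_cancel₀ hc, mul_one]
  map_eigenvector := by
    rw [smul_apply, map_smul, h.map_eigenvector, smul_eq_mul, smul_eq_mul,
      mul_one, inv_mul_cancel₀ hc]
  apply_eigenvector := by rw [map_smul, h.apply_eigenvector, smul_zero]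
  comp_eq_zero := by
    ext f
    simp [h.comp_eq_zero]

theorem pow_succ_apply (h : IsSpectralDecomposition P L p w Q) (n : ℕ) (f : E) :
    (P ^ (n + 1)) f = (L ^ (n + 1) * p f) • w + (Q ^ (n + 1)) f := by
  induction n with
  | zero => simpa using h.apply_eq f
  | succ n ih =>
    have hPw : P w = L • w := by simp [h.apply_eq w, h.map_eigenvector, h.apply_eigenvector]
    have hpQ : p ((Q ^ (n + 1)) f) = 0 := by
      rw [pow_succ', mul_apply_eq_comp, ← ContinuousLinearMap.comp_apply,
        h.comp_eq_zero, zero_apply]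
    rw [pow_succ' P, mul_apply_eq_comp, ih, map_add, map_smul, hPw,
      h.apply_eq ((Q ^ (n + 1)) f), hpQ, pow_succ' Q (n + 1), mul_apply_eq_comp,
      smul_smul, mul_zero, zero_smul, zero_add, pow_succ' L]
    ring_nf

theorem tendsto_inv_pow_smul_pow_apply (h : IsSpectralDecomposition P L p w Q) {C r : ℝ}
    (hr : 0 ≤ r) (hrL : r < ‖L‖) (hQ : ∀ n, ‖Q ^ n‖ ≤ C * r ^ n) (f : E) :
    Tendsto (fun n ↦ (L ^ (n + 1))⁻¹ • (P ^ (n + 1)) f) atTop (𝓝 (p f • w)) := by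
  have hL : L ≠ 0 := norm_pos_iff.1 (hr.trans_lt hrL)
  have heq : (fun n ↦ (L ^ (n + 1))⁻¹ • (P ^ (n + 1)) f)
      = fun n ↦ p f • w + (L ^ (n + 1))⁻¹ • (Q ^ (n + 1)) f := by
    ext n
    rw [h.pow_succ_apply, smul_add, smul_smul, inv_mul_cancel_left₀ (pow_ne_zero _ hL)]
  rw [heq]
  simpa using tendsto_const_nhds.add
    ((tendsto_inv_pow_smul_pow_apply_zero hr hrL hQ f).comp (tendsto_add_atTop_nat 1))

end IsSpectralDecomposition

end SpectralDecomposition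

section NonnegCone

variable {X : Type*} [MeasurableSpace X] {μ : Measure X}

theorem integral_nonneg_of_ae_complex {f : X → ℂ} (hf : 0 ≤ᵐ[μ] f) : 0 ≤ ∫ x, f x ∂μ := by
  have hreal : f =ᵐ[μ] fun x ↦ ((f x).re : ℂ) := hf.mono fun x (hx : 0 ≤ f x) ↦
    Complex.ext rfl (by simp [(Complex.nonneg_iff.1 hx).2.symm])
  rw [integral_congr_ae hreal, integral_complex_ofReal, Complex.zero_le_real]
  exact integral_nonneg_of_ae (hf.mono fun x (hx : 0 ≤ f x) ↦ (Complex.nonneg_iff.1 hx).1)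

theorem ae_nonneg_of_forall_setIntegral_nonneg_complex {f : X → ℂ} (hf : Integrable f μ)
    (h : ∀ s, MeasurableSet s → μ s < ∞ → 0 ≤ ∫ x in s, f x ∂μ) : 0 ≤ᵐ[μ] f := by
  have hre : 0 ≤ᵐ[μ] fun x ↦ RCLike.re (f x) :=
    ae_nonneg_of_forall_setIntegral_nonneg hf.re fun s hs hμs ↦ by
      rw [integral_re hf.restrict]
      exact (RCLike.nonneg_iff.1 (h s hs hμs)).1
  have him : (fun x ↦ RCLike.im (f x)) =ᵐ[μ] 0 :=
    hf.im.ae_eq_zero_of_forall_setIntegral_eq_zero fun s hs hμs ↦ by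
      rw [integral_im hf.restrict]
      exact (RCLike.nonneg_iff.1 (h s hs hμs)).2
  filter_upwards [hre, him] with x hx_re hx_im
  exact RCLike.nonneg_iff.2 ⟨hx_re, hx_im⟩

theorem isClosed_setOf_ae_nonneg_complex : IsClosed {f : X →₁[μ] ℂ | 0 ≤ᵐ[μ] f} := by
  have hcone : {f : X →₁[μ] ℂ | 0 ≤ᵐ[μ] f}
      = ⋂ s ∈ {s : Set X | MeasurableSet s}, {f | 0 ≤ ∫ x in s, f x ∂μ} := by
    ext f
    simp only [Set.mem_ofPred_eq, Set.mem_iInter]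
    exact ⟨fun hf s _ ↦ integral_nonneg_of_ae_complex (ae_restrict_of_ae hf),
      fun h ↦ ae_nonneg_of_forall_setIntegral_nonneg_complex (L1.integrable_coeFn f)
        fun s hs _ ↦ h s hs⟩
  rw [hcone]
  exact isClosed_biInter fun s _ ↦ isClosed_le continuous_const (continuous_setIntegral s)

theorem ae_nonneg_of_forall_setIntegral_eq_preimage {T : X → X} {f g : X → ℂ}
    (hg : Integrable g μ) (hfg : ∀ s, MeasurableSet s → ∫ x in s, g x ∂μ = ∫ x in T ⁻¹' s, f x ∂μ)
    (hf : 0 ≤ᵐ[μ] f) : 0 ≤ᵐ[μ] g :=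
  ae_nonneg_of_forall_setIntegral_nonneg_complex hg fun s hs _ ↦
    (hfg s hs).symm ▸ integral_nonneg_of_ae_complex (ae_restrict_of_ae hf)

variable {B : Type*} [NormedAddCommGroup B] [NormedSpace ℂ B]

-- `0 ≤ z` in `ComplexOrder` means that `z` is real and nonnegative.
def nonnegCone (ι : B →L[ℂ] Lp ℂ 1 μ) : Set B := {g | 0 ≤ᵐ[μ] ι g}

variable {ι : B →L[ℂ] Lp ℂ 1 μ}

theorem mem_nonnegCone_iff {g : B} :
    g ∈ nonnegCone ι ↔ ∀ᵐ x ∂μ, 0 ≤ (ι g x).re ∧ (ι g x).im = 0 := by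
  simp only [nonnegCone, Set.mem_ofPred_eq, EventuallyLE, Pi.zero_apply, Complex.nonneg_iff,
    eq_comm]

theorem isClosed_nonnegCone : IsClosed (nonnegCone ι) :=
  isClosed_setOf_ae_nonneg_complex.preimage ι.continuous

theorem integral_apply_smul (c : ℂ) (g : B) :
    ∫ x, ι (c • g) x ∂μ = c * ∫ x, ι g x ∂μ := by
  rw [map_smul, ← L1.integral_eq_integral, L1.integral_smul, L1.integral_eq_integral, smul_eq_mul]

theorem smul_mem_nonnegCone {c : ℂ} (hc : 0 ≤ c) {g : B} (hg : g ∈ nonnegCone ι) :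
    c • g ∈ nonnegCone ι := by
  change 0 ≤ᵐ[μ] ι (c • g)
  rw [map_smul]
  filter_upwards [Lp.coeFn_smul c (ι g), hg] with x hx hgx
  rw [hx, Pi.smul_apply, smul_eq_mul]
  exact mul_nonneg hc hgx

theorem mem_nonnegCone_of_ae_eq_exp {φ e : B} {θ : ℝ} (hφ : ∀ᵐ x ∂μ, (ι φ x).im = 0)
    (he : ∀ᵐ x ∂μ, ι e x = Complex.exp (θ * ι φ x)) : e ∈ nonnegCone ι := by
  filter_upwards [he, hφ] with x hx hφx
  have hexp_real : (θ : ℂ) * ι φ x = ((θ * (ι φ x).re : ℝ) : ℂ) := by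
    apply Complex.ext <;> simp [hφx]
  rw [Pi.zero_apply, hx, hexp_real, ← Complex.ofReal_exp]
  exact Complex.zero_le_real.2 (Real.exp_pos _).le

theorem mapsTo_nonnegCone_comp_mul {T : X → X} {PB : B →L[ℂ] B}
    (hPB : ∀ (f : B) (s : Set X), MeasurableSet s →
      ∫ x in s, ι (PB f) x ∂μ = ∫ x in T ⁻¹' s, ι f x ∂μ)
    {mulB : B →L[ℂ] B →L[ℂ] B} (hmulB : ∀ f g : B, ∀ᵐ x ∂μ, ι (mulB f g) x = ι f x * ι g x)
    {e : B} (he : e ∈ nonnegCone ι) :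
    Set.MapsTo (PB.comp (mulB e)) (nonnegCone ι) (nonnegCone ι) := fun f (hf : 0 ≤ᵐ[μ] ι f) ↦
  ae_nonneg_of_forall_setIntegral_eq_preimage (L1.integrable_coeFn _) (hPB (mulB e f)) <| by
    filter_upwards [hmulB e f, he, hf] with x hx hex hfx
    rw [hx]
    exact mul_nonneg hex hfx

end NonnegCone

theorem pos_of_nonneg_of_tendsto_div_pow {u : ℕ → ℂ} {L a : ℂ} (hu : ∀ n, 0 ≤ u n) (hL : L ≠ 0)
    (ha : a ≠ 0) (h : Tendsto (fun n ↦ u n / L ^ n) atTop (𝓝 a)) : 0 < L := by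
  have hratio : Tendsto (fun n ↦ u (n + 1) / L ^ (n + 1) / (u n / L ^ n) * L) atTop (𝓝 L) := by
    simpa [div_self ha] using ((h.comp (tendsto_add_atTop_nat 1)).div h ha).mul_const L
  have hratio_nonneg : ∀ n, 0 ≤ u (n + 1) / L ^ (n + 1) / (u n / L ^ n) * L := fun n ↦ by
    have hquot : u (n + 1) / L ^ (n + 1) / (u n / L ^ n) * L = u (n + 1) / u n := by
      rw [pow_succ]
      field_simp
    exact hquot ▸ div_nonneg (hu _) (hu _)
  exact (ge_of_tendsto' hratio hratio_nonneg).lt_of_ne hL.symm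

namespace IsSpectralDecomposition

variable {X : Type*} [MeasurableSpace X] {μ : Measure X}
  {B : Type*} [NormedAddCommGroup B] [NormedSpace ℂ B] {ι : B →L[ℂ] Lp ℂ 1 μ}
  {P Q : B →L[ℂ] B} {L : ℂ} {p : B →L[ℂ] ℂ} {w : B} {C r : ℝ}

theorem eigenvalue_pos (h : IsSpectralDecomposition P L p w Q) (hr : 0 ≤ r) (hrL : r < ‖L‖)
    (hQ : ∀ n, ‖Q ^ n‖ ≤ C * r ^ n) (hP : Set.MapsTo P (nonnegCone ι) (nonnegCone ι)) {g : B}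
    (hg : g ∈ nonnegCone ι) (hgw : p g * ∫ x, ι w x ∂μ ≠ 0) : 0 < L := by
  have hlim := ((continuous_integral.comp ι.continuous).tendsto _).comp
    (h.tendsto_inv_pow_smul_pow_apply hr hrL hQ g)
  simp only [Function.comp_def, integral_apply_smul, ← div_eq_inv_mul] at hlim
  exact pos_of_nonneg_of_tendsto_div_pow
    (fun n ↦ integral_nonneg_of_ae_complex (hP.pow n hg))
    (norm_pos_iff.1 (hr.trans_lt hrL)) hgw ((tendsto_add_atTop_iff_nat 1).1 hlim)

theorem smul_eigenvector_mem_nonnegCone (h : IsSpectralDecomposition P L p w Q) (hr : 0 ≤ r)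
    (hrL : r < ‖L‖) (hQ : ∀ n, ‖Q ^ n‖ ≤ C * r ^ n)
    (hP : Set.MapsTo P (nonnegCone ι) (nonnegCone ι)) (hL : 0 < L) {f : B}
    (hf : f ∈ nonnegCone ι) : p f • w ∈ nonnegCone ι :=
  isClosed_nonnegCone.mem_of_tendsto (h.tendsto_inv_pow_smul_pow_apply hr hrL hQ f)
    (Eventually.of_forall fun _ ↦
      smul_mem_nonnegCone (inv_nonneg.2 (pow_nonneg hL.le _)) (hP.pow _ hf))

theorem pos_and_renormalized_nonneg (h : IsSpectralDecomposition P L p w Q) (hr : 0 ≤ r)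
    (hrL : r < ‖L‖) (hQ : ∀ n, ‖Q ^ n‖ ≤ C * r ^ n)
    (hP : Set.MapsTo P (nonnegCone ι) (nonnegCone ι)) {g : B} (hg : g ∈ nonnegCone ι)
    (hgw : p g * ∫ x, ι w x ∂μ ≠ 0) :
    0 < L ∧ p g • w ∈ nonnegCone ι ∧ ∀ f ∈ nonnegCone ι, 0 ≤ ((p g)⁻¹ • p) f := by
  have hL := h.eigenvalue_pos hr hrL hQ hP hg hgw
  have hcone : ∀ f ∈ nonnegCone ι, p f • w ∈ nonnegCone ι := fun _ ↦
    h.smul_eigenvector_mem_nonnegCone hr hrL hQ hP hL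
  refine ⟨hL, hcone g hg, fun f hf ↦ ?_⟩
  have hquot : ((p g)⁻¹ • p) f = (∫ x, ι (p f • w) x ∂μ) / ∫ x, ι (p g • w) x ∂μ := by
    have hw : ∫ x, ι w x ∂μ ≠ 0 := right_ne_zero_of_mul hgw
    rw [integral_apply_smul, integral_apply_smul, smul_apply, smul_eq_mul]
    field_simp
  rw [hquot]
  exact div_nonneg (integral_nonneg_of_ae_complex (hcone f hf))
    (integral_nonneg_of_ae_complex (hcone g hg))

end IsSpectralDecomposition

theorem exists_lt_forall_mem_ball_of_eventually {α : Type*} [PseudoMetricSpace α] {x : α}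
    {q : α → Prop} (h : ∀ᶠ y in 𝓝 x, q y) {R : ℝ} (hR : 0 < R) :
    ∃ r, 0 < r ∧ r < R ∧ ∀ y ∈ Metric.ball x r, q y := by
  obtain ⟨ε, hε, hq⟩ := Metric.eventually_nhds_iff_ball.1 h
  have hmin : 0 < min ε R := lt_min hε hR
  refine ⟨min ε R / 2, by positivity, by linarith [min_le_right ε R], fun y hy ↦ hq y ?_⟩
  exact Metric.ball_subset_ball (by linarith [min_le_left ε R]) hy

theorem stmt_8_general
    {X : Type*} [MeasurableSpace X] (m : Measure X) [IsProbabilityMeasure m]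
    (T : X → X)
    -- B is a complex Banach space continuously embedded in L¹(m)
    {B : Type*} [NormedAddCommGroup B] [NormedSpace ℂ B]
    (ι : B →L[ℂ] Lp ℂ 1 m)
    -- constant functions lie in B
    (oneB : B) (honeB : ∀ᵐ x ∂m, (ι oneB : X → ℂ) x = 1)
    -- B is a Banach algebra : mulB is the pointwise multiplication, a continuous
    -- bilinear map (hence ∃ C > 0, ‖f*g‖_B ≤ C ‖f‖_B ‖g‖_B with C = ‖mulB‖)
    (mulB : B →L[ℂ] B →L[ℂ] B)
    (hmulB : ∀ f g : B, ∀ᵐ x ∂m,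
        (ι (mulB f g) : X → ℂ) x = (ι f : X → ℂ) x * (ι g : X → ℂ) x)
    -- P(B) ⊂ B and P restricted to B is bounded : PB is the restriction to B of the
    -- Perron-Frobenius operator P f = d m_f / dm, m_f (A) = ∫_{T⁻¹A} f dm
    (PB : B →L[ℂ] B)
    (hPB : ∀ (f : B) (A : Set X), MeasurableSet A →
        ∫ x in A, (ι (PB f) : X → ℂ) x ∂m = ∫ x in T ⁻¹' A, (ι f : X → ℂ) x ∂m)
    -- spectral gap : 1 is a simple eigenvalue of P on B and the only eigenvalue of
    -- modulus 1, so P f = ⟨m,f⟩ v + Q f with v the invariant density and Q of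
    -- spectral radius < 1, Q v = 0, ⟨m, Q f⟩ = 0
    (v : B)
    (hv1 : ∫ x, (ι v : X → ℂ) x ∂m = 1)
    -- φ ∈ B is a bounded real-valued observable with ∫ φ dμ = 0
    (φ : B) (hφreal : ∀ᵐ x ∂m, ((ι φ : X → ℂ) x).im = 0)
    -- E z is the element of B representing e^{zφ} (cf. Statement 6)
    (E : ℂ → B)
    (hE : ∀ z : ℂ, ∀ᵐ x ∂m, (ι (E z) : X → ℂ) x = Complex.exp (z * (ι φ : X → ℂ) x))
    -- data given by Proposition 1 : perturbed spectral decomposition of P_z f = P(e^{zφ} f)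
    (θ₀ : ℝ) (hθ₀ : 0 < θ₀) (C : ℝ) (hC : 0 < C) (η₁ η₂ : ℝ) (hη₂ : 0 < η₂)
    (lam : ℂ → ℂ) (vf : ℂ → B) (pf : ℂ → (B →L[ℂ] ℂ)) (Qf : ℂ → (B →L[ℂ] B))
    (hvfhol : DifferentiableOn ℂ vf (Metric.ball 0 θ₀))
    (hpfhol : DifferentiableOn ℂ pf (Metric.ball 0 θ₀))
    (hvf0 : vf 0 = v)
    (hpf0 : ∀ f : B, pf 0 f = ∫ x, (ι f : X → ℂ) x ∂m)
    (hPz : ∀ z ∈ Metric.ball (0 : ℂ) θ₀, ∀ f : B,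
        PB (mulB (E z) f) = (lam z * pf z f) • vf z + Qf z f)
    (hnorml : ∀ z ∈ Metric.ball (0 : ℂ) θ₀, pf z (vf z) = 1)
    (hQfv : ∀ z ∈ Metric.ball (0 : ℂ) θ₀, Qf z (vf z) = 0)
    (hpfQf : ∀ z ∈ Metric.ball (0 : ℂ) θ₀, (pf z).comp (Qf z) = 0)
    (hlamlb : ∀ z ∈ Metric.ball (0 : ℂ) θ₀, 1 - η₁ < ‖lam z‖)
    (hQfn : ∀ z ∈ Metric.ball (0 : ℂ) θ₀, ∀ n : ℕ, ‖(Qf z) ^ n‖ ≤ C * (1 - η₁ - η₂) ^ n)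
    :
    ∃ θ₁ : ℝ, 0 < θ₁ ∧ θ₁ < θ₀ ∧
      -- λ(θ) > 0 for real θ, |θ| < θ₁
      (∀ θ : ℝ, |θ| < θ₁ → 0 < (lam (θ : ℂ)).re ∧ (lam (θ : ℂ)).im = 0) ∧
      -- ⟨φ(z), 𝟙⟩ ≠ 0 on the smaller disc
      (∀ z ∈ Metric.ball (0 : ℂ) θ₁, pf z oneB ≠ 0) ∧
      -- ṽ and φ̃ are holomorphic
      DifferentiableOn ℂ (fun z => pf z oneB • vf z) (Metric.ball 0 θ₁) ∧
      DifferentiableOn ℂ (fun z => (pf z oneB)⁻¹ • pf z) (Metric.ball 0 θ₁) ∧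
      -- ṽ and φ̃ satisfy the conclusions of Proposition 1
      (∀ z ∈ Metric.ball (0 : ℂ) θ₁,
        (∀ f : B, PB (mulB (E z) f) =
            (lam z * ((pf z oneB)⁻¹ • pf z) f) • (pf z oneB • vf z) + Qf z f) ∧
        ((pf z oneB)⁻¹ • pf z) (pf z oneB • vf z) = 1 ∧
        Qf z (pf z oneB • vf z) = 0 ∧
        ((pf z oneB)⁻¹ • pf z).comp (Qf z) = 0) ∧
      -- positivity for real θ, |θ| < θ₁ : ṽ(θ) ≥ 0 m-a.e. ...
      (∀ θ : ℝ, |θ| < θ₁ →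
        (∀ᵐ x ∂m, 0 ≤ ((ι (pf (θ : ℂ) oneB • vf (θ : ℂ)) : X → ℂ) x).re ∧
            ((ι (pf (θ : ℂ) oneB • vf (θ : ℂ)) : X → ℂ) x).im = 0) ∧
        -- ... and φ̃(θ) is a positive linear functional
        (∀ f : B, (∀ᵐ x ∂m, 0 ≤ ((ι f : X → ℂ) x).re ∧ ((ι f : X → ℂ) x).im = 0) →
            0 ≤ (((pf (θ : ℂ) oneB)⁻¹ • pf (θ : ℂ)) f).re ∧
              (((pf (θ : ℂ) oneB)⁻¹ • pf (θ : ℂ)) f).im = 0)) := by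
  have hball0 : (0 : ℂ) ∈ Metric.ball (0 : ℂ) θ₀ := Metric.mem_ball_self hθ₀
  have hr : 0 ≤ 1 - η₁ - η₂ :=
    nonneg_of_mul_nonneg_right ((norm_nonneg _).trans (by simpa using hQfn 0 hball0 1)) hC
  have hrlam : ∀ z ∈ Metric.ball (0 : ℂ) θ₀, 1 - η₁ - η₂ < ‖lam z‖ := fun z hz ↦ by
    linarith [hlamlb z hz]
  have hdec : ∀ z ∈ Metric.ball (0 : ℂ) θ₀,
      IsSpectralDecomposition (PB.comp (mulB (E z))) (lam z) (pf z) (vf z) (Qf z) :=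
    fun z hz ↦ ⟨hPz z hz, hnorml z hz, hQfv z hz, hpfQf z hz⟩
  have ha : ∀ᶠ z in 𝓝 (0 : ℂ), pf z oneB * ∫ x, ι (vf z) x ∂m ≠ 0 := by
    have hnhds := Metric.isOpen_ball.mem_nhds hball0
    refine ContinuousAt.eventually_ne (ContinuousAt.mul ?_ ?_) ?_
    · exact (hpfhol.clm_apply (differentiableOn_const oneB)).continuousOn.continuousAt hnhds
    · exact (continuous_integral.comp ι.continuous).continuousAt.comp
        (hvfhol.continuousOn.continuousAt hnhds)
    · simp [hvf0, hv1, hpf0, integral_congr_ae honeB]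
  obtain ⟨θ₁, hθ₁, hθ₁θ₀, ha⟩ := exists_lt_forall_mem_ball_of_eventually ha hθ₀
  have hsub : Metric.ball (0 : ℂ) θ₁ ⊆ Metric.ball 0 θ₀ := Metric.ball_subset_ball hθ₁θ₀.le
  have hpf_one : ∀ z ∈ Metric.ball (0 : ℂ) θ₁, pf z oneB ≠ 0 := fun z hz ↦
    left_ne_zero_of_mul (ha z hz)
  have hreal : ∀ θ : ℝ, |θ| < θ₁ → (θ : ℂ) ∈ Metric.ball (0 : ℂ) θ₁ := fun θ hθ ↦ by
    simpa using hθ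
  have hone : oneB ∈ nonnegCone ι := mem_nonnegCone_iff.2 (honeB.mono fun x hx ↦ by simp [hx])
  have hpos : ∀ θ : ℝ, |θ| < θ₁ → 0 < lam θ ∧ pf θ oneB • vf θ ∈ nonnegCone ι ∧
      ∀ f ∈ nonnegCone ι, 0 ≤ ((pf θ oneB)⁻¹ • pf θ) f := fun θ hθ ↦
    have hθ₀ := hsub (hreal θ hθ)
    (hdec θ hθ₀).pos_and_renormalized_nonneg hr (hrlam θ hθ₀) (hQfn θ hθ₀)
      (mapsTo_nonnegCone_comp_mul hPB hmulB (mem_nonnegCone_of_ae_eq_exp hφreal (hE θ))) hone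
      (ha θ (hreal θ hθ))
  refine ⟨θ₁, hθ₁, hθ₁θ₀, fun θ hθ ↦ RCLike.pos_iff.1 (hpos θ hθ).1, hpf_one, ?_, ?_,
    fun z hz ↦ ?_, fun θ hθ ↦ ?_⟩
  · exact ((hpfhol.mono hsub).clm_apply (differentiableOn_const _)).smul (hvfhol.mono hsub)
  · exact (((hpfhol.mono hsub).clm_apply (differentiableOn_const _)).inv hpf_one).smul
      (hpfhol.mono hsub)
  · have h := (hdec z (hsub hz)).rescale (hpf_one z hz)
    exact ⟨h.apply_eq, h.map_eigenvector, h.apply_eigenvector, h.comp_eq_zero⟩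
  · obtain ⟨-, hv, hφ⟩ := hpos θ hθ
    exact ⟨mem_nonnegCone_iff.1 hv,
      fun f hf ↦ RCLike.nonneg_iff.1 (hφ f (mem_nonnegCone_iff.2 hf))⟩

/-- **Proposition 2.** For real `θ` small, `λ(θ) > 0`; moreover the
eigenvector and eigenform can be renormalized as `ṽ(z) = ⟨φ(z),𝟙⟩ v(z)`,
`φ̃(z) = ⟨φ(z),𝟙⟩⁻¹ φ(z)`, staying holomorphic and satisfying the conclusions of
Proposition 1, with `ṽ(θ) ≥ 0` and `φ̃(θ)` a positive linear functional for real `θ`. -/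
theorem stmt_8
    {X : Type*} [MeasurableSpace X] (m : Measure X) [IsProbabilityMeasure m]
    (T : X → X) (hT : Measurable T)
    (hns : ∀ A : Set X, MeasurableSet A → m A = 0 → m (T ⁻¹' A) = 0)
    -- B is a complex Banach space continuously embedded in L¹(m)
    {B : Type*} [NormedAddCommGroup B] [NormedSpace ℂ B] [CompleteSpace B]
    (ι : B →L[ℂ] Lp ℂ 1 m) (hι : Function.Injective ι)
    -- constant functions lie in B
    (oneB : B) (honeB : ∀ᵐ x ∂m, (ι oneB : X → ℂ) x = 1)
    -- B is a Banach algebra : mulB is the pointwise multiplication, a continuous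
    -- bilinear map (hence ∃ C > 0, ‖f*g‖_B ≤ C ‖f‖_B ‖g‖_B with C = ‖mulB‖)
    (mulB : B →L[ℂ] B →L[ℂ] B)
    (hmulB : ∀ f g : B, ∀ᵐ x ∂m,
        (ι (mulB f g) : X → ℂ) x = (ι f : X → ℂ) x * (ι g : X → ℂ) x)
    -- B is a complex Banach lattice : stable under conjugation and modulus
    (conjB : B → B)
    (hconjB : ∀ f : B, ∀ᵐ x ∂m, (ι (conjB f) : X → ℂ) x = starRingEnd ℂ ((ι f : X → ℂ) x))
    (absB : B → B)
    (habsB : ∀ f : B, ∀ᵐ x ∂m,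
        (ι (absB f) : X → ℂ) x = ((‖(ι f : X → ℂ) x‖ : ℝ) : ℂ))
    -- P(B) ⊂ B and P restricted to B is bounded : PB is the restriction to B of the
    -- Perron-Frobenius operator P f = d m_f / dm, m_f (A) = ∫_{T⁻¹A} f dm
    (PB : B →L[ℂ] B)
    (hPB : ∀ (f : B) (A : Set X), MeasurableSet A →
        ∫ x in A, (ι (PB f) : X → ℂ) x ∂m = ∫ x in T ⁻¹' A, (ι f : X → ℂ) x ∂m)
    -- the spectral radius of P on B is 1
    (hrad : spectralRadius ℂ (PB : B →L[ℂ] B) = 1)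
    -- spectral gap : 1 is a simple eigenvalue of P on B and the only eigenvalue of
    -- modulus 1, so P f = ⟨m,f⟩ v + Q f with v the invariant density and Q of
    -- spectral radius < 1, Q v = 0, ⟨m, Q f⟩ = 0
    (v : B) (hv0 : ∀ᵐ x ∂m, 0 ≤ ((ι v : X → ℂ) x).re ∧ ((ι v : X → ℂ) x).im = 0)
    (hv1 : ∫ x, (ι v : X → ℂ) x ∂m = 1) (hvfix : PB v = v)
    (Q : B →L[ℂ] B) (hQrad : spectralRadius ℂ (Q : B →L[ℂ] B) < 1)
    (hQv : Q v = 0) (hQm : ∀ f : B, ∫ x, (ι (Q f) : X → ℂ) x ∂m = 0)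
    (hdecomp : ∀ f : B, PB f = (∫ x, (ι f : X → ℂ) x ∂m) • v + Q f)
    -- μ = v · m is the unique T-invariant a.c.i.p. with density in B
    (μ : Measure X)
    (hμ : μ = m.withDensity fun x => ENNReal.ofReal ((ι v : X → ℂ) x).re)
    -- φ ∈ B is a bounded real-valued observable with ∫ φ dμ = 0
    (φ : B) (hφreal : ∀ᵐ x ∂m, ((ι φ : X → ℂ) x).im = 0)
    (hφbdd : ∃ K : ℝ, ∀ᵐ x ∂m, ‖(ι φ : X → ℂ) x‖ ≤ K)
    (hφmean : ∫ x, ((ι φ : X → ℂ) x).re ∂μ = 0)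
    -- E z is the element of B representing e^{zφ} (cf. Statement 6)
    (E : ℂ → B)
    (hE : ∀ z : ℂ, ∀ᵐ x ∂m, (ι (E z) : X → ℂ) x = Complex.exp (z * (ι φ : X → ℂ) x))
    -- data given by Proposition 1 : perturbed spectral decomposition of P_z f = P(e^{zφ} f)
    (θ₀ : ℝ) (hθ₀ : 0 < θ₀) (C : ℝ) (hC : 0 < C) (η₁ η₂ : ℝ) (hη₁ : 0 < η₁) (hη₂ : 0 < η₂)
    (lam : ℂ → ℂ) (vf : ℂ → B) (pf : ℂ → (B →L[ℂ] ℂ)) (Qf : ℂ → (B →L[ℂ] B))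
    (hlamhol : DifferentiableOn ℂ lam (Metric.ball 0 θ₀))
    (hvfhol : DifferentiableOn ℂ vf (Metric.ball 0 θ₀))
    (hpfhol : DifferentiableOn ℂ pf (Metric.ball 0 θ₀))
    (hQfhol : DifferentiableOn ℂ Qf (Metric.ball 0 θ₀))
    (hlam0 : lam 0 = 1) (hvf0 : vf 0 = v)
    (hpf0 : ∀ f : B, pf 0 f = ∫ x, (ι f : X → ℂ) x ∂m) (hQf0 : Qf 0 = Q)
    (hPz : ∀ z ∈ Metric.ball (0 : ℂ) θ₀, ∀ f : B,
        PB (mulB (E z) f) = (lam z * pf z f) • vf z + Qf z f)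
    (hnorml : ∀ z ∈ Metric.ball (0 : ℂ) θ₀, pf z (vf z) = 1)
    (hQfv : ∀ z ∈ Metric.ball (0 : ℂ) θ₀, Qf z (vf z) = 0)
    (hpfQf : ∀ z ∈ Metric.ball (0 : ℂ) θ₀, (pf z).comp (Qf z) = 0)
    (hlamlb : ∀ z ∈ Metric.ball (0 : ℂ) θ₀, 1 - η₁ < ‖lam z‖)
    (hQfn : ∀ z ∈ Metric.ball (0 : ℂ) θ₀, ∀ n : ℕ, ‖(Qf z) ^ n‖ ≤ C * (1 - η₁ - η₂) ^ n)
    :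
    ∃ θ₁ : ℝ, 0 < θ₁ ∧ θ₁ < θ₀ ∧
      -- λ(θ) > 0 for real θ, |θ| < θ₁
      (∀ θ : ℝ, |θ| < θ₁ → 0 < (lam (θ : ℂ)).re ∧ (lam (θ : ℂ)).im = 0) ∧
      -- ⟨φ(z), 𝟙⟩ ≠ 0 on the smaller disc
      (∀ z ∈ Metric.ball (0 : ℂ) θ₁, pf z oneB ≠ 0) ∧
      -- ṽ and φ̃ are holomorphic
      DifferentiableOn ℂ (fun z => pf z oneB • vf z) (Metric.ball 0 θ₁) ∧
      DifferentiableOn ℂ (fun z => (pf z oneB)⁻¹ • pf z) (Metric.ball 0 θ₁) ∧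
      -- ṽ and φ̃ satisfy the conclusions of Proposition 1
      (∀ z ∈ Metric.ball (0 : ℂ) θ₁,
        (∀ f : B, PB (mulB (E z) f) =
            (lam z * ((pf z oneB)⁻¹ • pf z) f) • (pf z oneB • vf z) + Qf z f) ∧
        ((pf z oneB)⁻¹ • pf z) (pf z oneB • vf z) = 1 ∧
        Qf z (pf z oneB • vf z) = 0 ∧
        ((pf z oneB)⁻¹ • pf z).comp (Qf z) = 0) ∧
      -- positivity for real θ, |θ| < θ₁ : ṽ(θ) ≥ 0 m-a.e. ...
      (∀ θ : ℝ, |θ| < θ₁ →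
        (∀ᵐ x ∂m, 0 ≤ ((ι (pf (θ : ℂ) oneB • vf (θ : ℂ)) : X → ℂ) x).re ∧
            ((ι (pf (θ : ℂ) oneB • vf (θ : ℂ)) : X → ℂ) x).im = 0) ∧
        -- ... and φ̃(θ) is a positive linear functional
        (∀ f : B, (∀ᵐ x ∂m, 0 ≤ ((ι f : X → ℂ) x).re ∧ ((ι f : X → ℂ) x).im = 0) →
            0 ≤ (((pf (θ : ℂ) oneB)⁻¹ • pf (θ : ℂ)) f).re ∧
              (((pf (θ : ℂ) oneB)⁻¹ • pf (θ : ℂ)) f).im = 0)) :=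
  stmt_8_general m T ι oneB honeB mulB hmulB PB hPB v hv1 φ hφreal E hE θ₀ hθ₀ C hC η₁ η₂ hη₂ lam vf
    pf Qf hvfhol hpfhol hvf0 hpf0 hPz hnorml hQfv hpfQf hlamlb hQfn
end

section
/- (Proposition 4: local Gärtner–Ellis theorem.) For each n ≥ 1 let ℙ_n be a probability measure on a measurable space (Ω, 𝒯), with expectation 𝔼_n, and let S_n : Ω → ℝ be a random variable. Assume that there are θ_Λ > 0 and a function Λ : [−θ_Λ, θ_Λ] → ℝ, strictly convex and continuously differentiable with Λ'(0) = 0, such that lim_{n→∞} (1/n) log 𝔼_n[exp(θ S_n)] = Λ(θ) for all θ ∈ [−θ_Λ, θ_Λ]. Define ε₊ = Λ'(θ_Λ) > 0, ε₋ = Λ'(−θ_Λ) < 0, and c(ε) = sup_{|θ| ≤ θ_Λ} { θε − Λ(θ) }. Then c is nonnegative, strictly convex on [ε₋, ε₊], continuous, vanishes only at 0, and for every 0 < ε < ε₀ := ε₊ one has lim_{n→∞} (1/n) log ℙ_n(S_n > nε) = −c(ε). -/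
/-!
Since `Λ` is strictly convex with continuous derivative, `Λ'` maps `[-θ_Λ, θ_Λ]` increasingly onto
`[ε₋, ε₊]`, and for `ε = Λ'(θ)` the tangent line inequality shows that the supremum defining `c(ε)`
is attained at `θ`. Convexity, continuity (indeed `θ_Λ`-Lipschitz) and the zero set of `c` all
follow from this description.

For `0 < ε < ε₊` let `θ > 0` be the maximiser. Chernoff's bound at `θ` gives the upper bound. For
the lower bound tilt by some `η` slightly larger than `θ`: comparing `𝔼_n[e^{η Sₙ}]` with the
moment generating functions at `θ₁ ∈ (θ, η)` and at `θ₂ > η` with `Λ'(θ₂) < ε'` shows that the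
tilted mass of `{Sₙ ≤ nε}` and of `{Sₙ > nε'}` is exponentially negligible, so that
`ℙ_n(Sₙ > nε) ≥ e^{-nηε'} 𝔼_n[e^{η Sₙ}] / 2`. Letting `η ↓ θ` and `ε' ↓ Λ'(η)` the rate
`ηε' - Λ(η)` tends to `θε - Λ(θ) = c(ε)`.
-/

open MeasureTheory ProbabilityTheory Filter Topology Set Real

section Tangent

variable {s : Set ℝ} {f : ℝ → ℝ} {f' x y : ℝ}

lemma ConvexOn.add_mul_sub_le_of_hasDerivWithinAt (hf : ConvexOn ℝ s f) (hx : x ∈ s)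
    (hy : y ∈ s) (hd : HasDerivWithinAt f f' s x) : f x + f' * (y - x) ≤ f y := by
  rcases lt_trichotomy x y with h | rfl | h
  · have := hf.le_slope_of_hasDerivWithinAt hx hy h hd
    rw [slope_def_field, le_div_iff₀ (sub_pos.2 h)] at this
    linarith
  · simp
  · have := hf.slope_le_of_hasDerivWithinAt hy hx h hd
    rw [slope_def_field, div_le_iff₀ (sub_pos.2 h)] at this
    linarith

lemma StrictConvexOn.add_mul_sub_lt_of_hasDerivWithinAt (hf : StrictConvexOn ℝ s f) (hx : x ∈ s)
    (hy : y ∈ s) (hne : y ≠ x) (hd : HasDerivWithinAt f f' s x) : f x + f' * (y - x) < f y := by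
  rcases hne.lt_or_gt with h | h
  · have := hf.slope_lt_of_hasDerivWithinAt hy hx h hd
    rw [slope_def_field, div_lt_iff₀ (sub_pos.2 h)] at this
    linarith
  · have := hf.lt_slope_of_hasDerivWithinAt hx hy h hd
    rw [slope_def_field, lt_div_iff₀ (sub_pos.2 h)] at this
    linarith

lemma StrictConvexOn.strictMonoOn_of_hasDerivWithinAt {f' : ℝ → ℝ} (hf : StrictConvexOn ℝ s f)
    (hd : ∀ x ∈ s, HasDerivWithinAt f (f' x) s x) : StrictMonoOn f' s := fun x hx y hy hxy =>
  (hf.lt_slope_of_hasDerivWithinAt hx hy hxy (hd x hx)).trans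
    (hf.slope_lt_of_hasDerivWithinAt hx hy hxy (hd y hy))

lemma StrictConvexOn.pos_of_hasDerivWithinAt_zero (hf : StrictConvexOn ℝ s f) (h0 : 0 ∈ s)
    (hf0 : f 0 = 0) (hd : HasDerivWithinAt f 0 s 0) (hx : x ∈ s) (hx0 : x ≠ 0) : 0 < f x := by
  simpa [hf0] using hf.add_mul_sub_lt_of_hasDerivWithinAt h0 hx hx0 hd

end Tangent

lemma exists_mem_Ioo_lt_of_continuousOn_Icc {f : ℝ → ℝ} {a b x y : ℝ}
    (hf : ContinuousOn f (Icc a b)) (hx : x ∈ Ico a b) (hy : f x < y) :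
    ∃ z ∈ Ioo x b, f z < y :=
  ((((hf x (Ico_subset_Icc_self hx)).mono_of_mem_nhdsWithin (Icc_mem_nhdsGT_of_mem hx)).eventually
    (gt_mem_nhds hy)).and (Ioo_mem_nhdsGT hx.2)).exists.imp fun _ hz => ⟨hz.2, hz.1⟩

/-- The paper's `c`, for `s = [-θ_Λ, θ_Λ]`. An unbounded `⨆` in `ℝ` has the junk value `0`; the
lemmas below only evaluate it at slopes `Λ' θ₀`, where the supremum is attained at `θ₀`. -/
noncomputable def legendreOn (s : Set ℝ) (Λ : ℝ → ℝ) (ε : ℝ) : ℝ :=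
  ⨆ θ : s, (θ : ℝ) * ε - Λ θ

section Legendre

variable {s t : Set ℝ} {Λ Λ' : ℝ → ℝ} {θ θ₀ ε : ℝ}

lemma legendreOn_eq_of_hasDerivWithinAt (hΛ : ConvexOn ℝ s Λ) (hθ₀ : θ₀ ∈ s)
    (hd : HasDerivWithinAt Λ ε s θ₀) : legendreOn s Λ ε = θ₀ * ε - Λ θ₀ := by
  have : Nonempty s := ⟨⟨θ₀, hθ₀⟩⟩
  refine ciSup_eq_of_forall_le_of_forall_lt_exists_gt (fun θ => ?_)
    fun _ hw => ⟨⟨θ₀, hθ₀⟩, hw⟩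
  linarith [hΛ.add_mul_sub_le_of_hasDerivWithinAt hθ₀ θ.2 hd]

lemma sub_le_legendreOn_of_hasDerivWithinAt (hΛ : ConvexOn ℝ s Λ) (hθ₀ : θ₀ ∈ s)
    (hd : HasDerivWithinAt Λ ε s θ₀) (hθ : θ ∈ s) : θ * ε - Λ θ ≤ legendreOn s Λ ε := by
  rw [legendreOn_eq_of_hasDerivWithinAt hΛ hθ₀ hd]
  linarith [hΛ.add_mul_sub_le_of_hasDerivWithinAt hθ₀ hθ hd]

lemma sub_lt_legendreOn_of_hasDerivWithinAt (hΛ : StrictConvexOn ℝ s Λ) (hθ₀ : θ₀ ∈ s)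
    (hd : HasDerivWithinAt Λ ε s θ₀) (hθ : θ ∈ s) (hne : θ ≠ θ₀) :
    θ * ε - Λ θ < legendreOn s Λ ε := by
  rw [legendreOn_eq_of_hasDerivWithinAt hΛ.convexOn hθ₀ hd]
  linarith [hΛ.add_mul_sub_lt_of_hasDerivWithinAt hθ₀ hθ hne hd]

lemma legendreOn_nonneg (hΛ : ConvexOn ℝ s Λ) (h0 : 0 ∈ s) (hΛ0 : Λ 0 = 0) (hθ₀ : θ₀ ∈ s)
    (hd : HasDerivWithinAt Λ ε s θ₀) : 0 ≤ legendreOn s Λ ε := by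
  simpa [hΛ0] using sub_le_legendreOn_of_hasDerivWithinAt hΛ hθ₀ hd h0

lemma legendreOn_deriv_eq_zero_iff (hΛ : StrictConvexOn ℝ s Λ)
    (hd : ∀ θ ∈ s, HasDerivWithinAt Λ (Λ' θ) s θ) (h0 : 0 ∈ s) (hΛ0 : Λ 0 = 0) (hΛ'0 : Λ' 0 = 0)
    (hθ₀ : θ₀ ∈ s) : legendreOn s Λ (Λ' θ₀) = 0 ↔ Λ' θ₀ = 0 := by
  constructor
  · intro h
    by_contra hne
    have h0θ₀ : 0 ≠ θ₀ := by rintro rfl; exact hne hΛ'0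
    simpa [hΛ0, h] using sub_lt_legendreOn_of_hasDerivWithinAt hΛ hθ₀ (hd θ₀ hθ₀) h0 h0θ₀
  · intro h
    rw [h]
    simpa [hΛ0, hΛ'0] using legendreOn_eq_of_hasDerivWithinAt hΛ.convexOn h0 (hd 0 h0)

lemma strictConvexOn_legendreOn (hΛ : StrictConvexOn ℝ s Λ)
    (hd : ∀ θ ∈ s, HasDerivWithinAt Λ (Λ' θ) s θ) (ht : Convex ℝ t) (hts : t ⊆ Λ' '' s) :
    StrictConvexOn ℝ t (legendreOn s Λ) := by
  refine ⟨ht, fun x hx y hy hxy a b ha hb hab => ?_⟩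
  obtain ⟨θx, hθx, rfl⟩ := hts hx
  obtain ⟨θy, hθy, rfl⟩ := hts hy
  obtain ⟨θz, hθz, hz⟩ := hts (ht hx hy ha.le hb.le hab)
  simp only [smul_eq_mul] at hz ⊢
  have hne : θz ≠ θx := by
    rintro rfl
    have : b * (Λ' θz - Λ' θy) = 0 := by linear_combination hz + Λ' θz * hab
    exact hxy (sub_eq_zero.1 ((mul_eq_zero.1 this).resolve_left hb.ne'))
  have hx' := sub_lt_legendreOn_of_hasDerivWithinAt hΛ hθx (hd θx hθx) hθz hne
  have hy' := sub_le_legendreOn_of_hasDerivWithinAt hΛ.convexOn hθy (hd θy hθy) hθz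
  rw [← hz, legendreOn_eq_of_hasDerivWithinAt hΛ.convexOn hθz (hd θz hθz), hz]
  linear_combination mul_lt_mul_of_pos_left hx' ha + mul_le_mul_of_nonneg_left hy' hb.le
    + Λ θz * hab

lemma lipschitzOnWith_legendreOn (K : NNReal) (hK : ∀ θ ∈ s, |θ| ≤ K) (hΛ : ConvexOn ℝ s Λ)
    (hd : ∀ θ ∈ s, HasDerivWithinAt Λ (Λ' θ) s θ) (hts : t ⊆ Λ' '' s) :
    LipschitzOnWith K (legendreOn s Λ) t := by
  refine LipschitzOnWith.of_le_add_mul K fun p hp q hq => ?_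
  obtain ⟨θp, hθp, rfl⟩ := hts hp
  obtain ⟨θq, hθq, rfl⟩ := hts hq
  have hq' := sub_le_legendreOn_of_hasDerivWithinAt hΛ hθq (hd θq hθq) hθp
  have hθ : θp * (Λ' θp - Λ' θq) ≤ K * dist (Λ' θp) (Λ' θq) := by
    calc θp * (Λ' θp - Λ' θq) ≤ |θp| * |Λ' θp - Λ' θq| := abs_mul θp _ ▸ le_abs_self _
      _ ≤ K * dist (Λ' θp) (Λ' θq) := by rw [dist_eq]; gcongr; exact hK θp hθp
  rw [legendreOn_eq_of_hasDerivWithinAt hΛ hθp (hd θp hθp)]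
  linarith

end Legendre

lemma eventually_exp_mul_mul_le_mul {z y : ℕ → ℝ} {k A B c : ℝ} (hy : ∀ᶠ n in atTop, 0 < y n)
    (hzA : Tendsto (fun n : ℕ => (n : ℝ)⁻¹ * log (z n)) atTop (𝓝 A))
    (hyB : Tendsto (fun n : ℕ => (n : ℝ)⁻¹ * log (y n)) atTop (𝓝 B)) (hc : 0 < c)
    (hk : k + A < B) : ∀ᶠ n : ℕ in atTop, exp (n * k) * z n ≤ c * y n := by
  have hu : Tendsto (fun n : ℕ => (n : ℝ) * (k + (n : ℝ)⁻¹ * log (z n) - (n : ℝ)⁻¹ * log (y n)))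
      atTop atBot :=
    tendsto_natCast_atTop_atTop.atTop_mul_neg (by linarith)
      ((tendsto_const_nhds.add hzA).sub hyB)
  filter_upwards [hu.eventually_lt_atBot (log c), hy, eventually_ne_atTop 0] with n hn hyn hn0
  have hn' : (n : ℝ) ≠ 0 := Nat.cast_ne_zero.2 hn0
  rw [mul_sub, mul_add, mul_inv_cancel_left₀ hn', mul_inv_cancel_left₀ hn'] at hn
  calc exp (n * k) * z n ≤ exp (n * k) * exp (log (z n)) := by gcongr; exact le_exp_log _
    _ = exp (n * k + log (z n) - log (y n)) * y n := by
      rw [exp_sub, exp_add, exp_log hyn, div_mul_cancel₀ _ hyn.ne']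
    _ ≤ c * y n := by
      gcongr
      exact (exp_le_exp.2 hn.le).trans_eq (exp_log hc)

lemma tendsto_inv_mul_log_of_exp_bounds {p : ℕ → ℝ} {l : ℝ}
    (hlow : ∀ m < l, ∀ᶠ n : ℕ in atTop, exp (n * m) ≤ p n)
    (hup : ∀ m > l, ∀ᶠ n : ℕ in atTop, p n ≤ exp (n * m)) :
    Tendsto (fun n : ℕ => (n : ℝ)⁻¹ * log (p n)) atTop (𝓝 l) := by
  refine tendsto_order.2 ⟨fun m hm => ?_, fun m hm => ?_⟩
  · obtain ⟨m', hmm', hm'l⟩ := exists_between hm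
    filter_upwards [hlow m' hm'l, eventually_gt_atTop 0] with n hn hn0
    have hn' : (0 : ℝ) < n := Nat.cast_pos.2 hn0
    have := log_le_log (exp_pos _) hn
    rw [log_exp] at this
    calc m < m' := hmm'
      _ = (n : ℝ)⁻¹ * (n * m') := (inv_mul_cancel_left₀ hn'.ne' m').symm
      _ ≤ (n : ℝ)⁻¹ * log (p n) := by gcongr
  · obtain ⟨m', hlm', hm'm⟩ := exists_between hm
    obtain ⟨m₀, hm₀⟩ := exists_lt l
    filter_upwards [hup m' hlm', hlow m₀ hm₀, eventually_gt_atTop 0] with n hn hpos hn0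
    have hn' : (0 : ℝ) < n := Nat.cast_pos.2 hn0
    have := log_le_log ((exp_pos _).trans_le hpos) hn
    rw [log_exp] at this
    calc (n : ℝ)⁻¹ * log (p n) ≤ (n : ℝ)⁻¹ * (n * m') := by gcongr
      _ = m' := inv_mul_cancel_left₀ hn'.ne' m'
      _ < m := hm'm

section LargeDeviations

variable {Ω : Type*} [MeasurableSpace Ω]

lemma mgf_le_exp_mul_mgf_add_measureReal_add (μ : Measure Ω) [IsFiniteMeasure μ] {X : Ω → ℝ}
    (hX : Measurable X) {θ₁ η θ₂ a b : ℝ} (hθ₁ : θ₁ ≤ η) (hθ₂ : η ≤ θ₂) (hη : 0 ≤ η)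
    (hi₁ : Integrable (fun ω => exp (θ₁ * X ω)) μ)
    (hi₂ : Integrable (fun ω => exp (θ₂ * X ω)) μ) :
    mgf X μ η ≤ exp ((η - θ₁) * a) * mgf X μ θ₁ + exp (η * b) * μ.real {ω | a < X ω}
      + exp ((η - θ₂) * b) * mgf X μ θ₂ := by
  set A := {ω | a < X ω}
  have hA : MeasurableSet A := measurableSet_lt measurable_const hX
  have key : ∀ ω, exp (η * X ω) ≤ exp ((η - θ₁) * a) * exp (θ₁ * X ω)
      + A.indicator (fun _ => exp (η * b)) ω + exp ((η - θ₂) * b) * exp (θ₂ * X ω) := by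
    intro ω
    have h₀ : 0 ≤ A.indicator (fun _ => exp (η * b)) ω :=
      indicator_nonneg (fun _ _ => (exp_pos _).le) _
    rw [← exp_add, ← exp_add]
    rcases le_or_gt (X ω) a with ha | ha
    · have : exp (η * X ω) ≤ exp ((η - θ₁) * a + θ₁ * X ω) := exp_le_exp.2 (by nlinarith)
      linarith [exp_pos ((η - θ₂) * b + θ₂ * X ω)]
    rcases le_or_gt (X ω) b with hb | hb
    · have : exp (η * X ω) ≤ A.indicator (fun _ => exp (η * b)) ω := by
        rw [indicator_of_mem (show ω ∈ A from ha)]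
        exact exp_le_exp.2 (by nlinarith)
      linarith [exp_pos ((η - θ₁) * a + θ₁ * X ω), exp_pos ((η - θ₂) * b + θ₂ * X ω)]
    · have : exp (η * X ω) ≤ exp ((η - θ₂) * b + θ₂ * X ω) := exp_le_exp.2 (by nlinarith)
      linarith [exp_pos ((η - θ₁) * a + θ₁ * X ω)]
  have hiA : Integrable (A.indicator fun _ => exp (η * b)) μ :=
    (integrable_const _).indicator hA
  calc mgf X μ η ≤ ∫ ω, (exp ((η - θ₁) * a) * exp (θ₁ * X ω)
        + A.indicator (fun _ => exp (η * b)) ω + exp ((η - θ₂) * b) * exp (θ₂ * X ω)) ∂μ :=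
      integral_mono_of_nonneg (ae_of_all _ fun _ => (exp_pos _).le)
        (((hi₁.const_mul _).add hiA).add (hi₂.const_mul _)) (ae_of_all _ key)
    _ = _ := by
      rw [integral_add, integral_add, integral_const_mul, integral_const_mul,
        integral_indicator_const _ hA, smul_eq_mul, mul_comm (μ.real A)]
      exacts [rfl, hi₁.const_mul _, hiA, (hi₁.const_mul _).add hiA, hi₂.const_mul _]

lemma eventually_integrable_exp_mul_of_tendsto {P : ℕ → Measure Ω} {S : ℕ → Ω → ℝ} {θ L : ℝ}
    (hlim : Tendsto (fun n : ℕ => (n : ℝ)⁻¹ * cgf (S n) (P n) θ) atTop (𝓝 L)) (hL : L ≠ 0) :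
    ∀ᶠ n in atTop, Integrable (fun ω => exp (θ * S n ω)) (P n) := by
  filter_upwards [hlim.eventually_ne hL] with n hn
  by_contra hi
  simp [cgf_undef hi] at hn

variable {P : ℕ → Measure Ω} [∀ n, IsProbabilityMeasure (P n)] {S : ℕ → Ω → ℝ}

lemma eventually_exp_mul_le_measureReal_gt_of_rates (hS : ∀ n, Measurable (S n)) {Λ : ℝ → ℝ}
    {θ₁ η θ₂ ε ε' m : ℝ} (hθ₁ : θ₁ ≤ η) (hθ₂ : η ≤ θ₂) (hη : 0 ≤ η)
    (hi₁ : ∀ᶠ n in atTop, Integrable (fun ω => exp (θ₁ * S n ω)) (P n))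
    (hi₂ : ∀ᶠ n in atTop, Integrable (fun ω => exp (θ₂ * S n ω)) (P n))
    (hlim₁ : Tendsto (fun n : ℕ => (n : ℝ)⁻¹ * cgf (S n) (P n) θ₁) atTop (𝓝 (Λ θ₁)))
    (hlimη : Tendsto (fun n : ℕ => (n : ℝ)⁻¹ * cgf (S n) (P n) η) atTop (𝓝 (Λ η)))
    (hlim₂ : Tendsto (fun n : ℕ => (n : ℝ)⁻¹ * cgf (S n) (P n) θ₂) atTop (𝓝 (Λ θ₂)))
    (hr₁ : (η - θ₁) * ε + Λ θ₁ < Λ η) (hr₂ : (η - θ₂) * ε' + Λ θ₂ < Λ η)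
    (hm : m < Λ η - η * ε') :
    ∀ᶠ n : ℕ in atTop, exp (n * m) ≤ (P n).real {ω | n * ε < S n ω} := by
  have hZ : ∀ᶠ n in atTop, 0 < mgf (S n) (P n) η := by
    filter_upwards [hi₁, hi₂] with n h₁ h₂
    exact mgf_pos (integrable_exp_mul_of_le_of_le h₁ h₂ hθ₁ hθ₂)
  have hone : Tendsto (fun n : ℕ => (n : ℝ)⁻¹ * log 1) atTop (𝓝 0) := by simp
  have hmain := eventually_exp_mul_mul_le_mul (k := m + η * ε') hZ hone hlimη
    (by norm_num : (0 : ℝ) < 1 / 2) (by linarith)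
  have htail₁ := eventually_exp_mul_mul_le_mul hZ hlim₁ hlimη (by norm_num : (0 : ℝ) < 1 / 4) hr₁
  have htail₂ := eventually_exp_mul_mul_le_mul hZ hlim₂ hlimη (by norm_num : (0 : ℝ) < 1 / 4) hr₂
  filter_upwards [hmain, htail₁, htail₂, hi₁, hi₂] with n hmain htail₁ htail₂ hi₁ hi₂
  have hsplit := mgf_le_exp_mul_mgf_add_measureReal_add (P n) (hS n) hθ₁ hθ₂ hη hi₁ hi₂
    (a := n * ε) (b := n * ε')
  rw [mul_left_comm, mul_left_comm (η - θ₂)] at hsplit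
  have hexp : exp (n * (m + η * ε')) = exp (η * (n * ε')) * exp (n * m) := by
    rw [← exp_add]; ring_nf
  rw [mul_one, hexp] at hmain
  exact le_of_mul_le_mul_left (a := exp (η * (n * ε'))) (by linarith) (exp_pos _)

lemma eventually_measureReal_gt_le_exp_mul {θ ε L m : ℝ} (hθ : 0 ≤ θ)
    (hi : ∀ᶠ n in atTop, Integrable (fun ω => exp (θ * S n ω)) (P n))
    (hlim : Tendsto (fun n : ℕ => (n : ℝ)⁻¹ * cgf (S n) (P n) θ) atTop (𝓝 L))
    (hm : L - θ * ε < m) :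
    ∀ᶠ n : ℕ in atTop, (P n).real {ω | n * ε < S n ω} ≤ exp (n * m) := by
  have hexp : Tendsto (fun n : ℕ => (n : ℝ)⁻¹ * log (exp (n * m))) atTop (𝓝 m) := by
    refine tendsto_const_nhds.congr' ?_
    filter_upwards [eventually_ne_atTop 0] with n hn
    rw [log_exp, inv_mul_cancel_left₀ (Nat.cast_ne_zero.2 hn)]
  filter_upwards [eventually_exp_mul_mul_le_mul (k := -θ * ε)
    (Eventually.of_forall fun _ => exp_pos _) hlim hexp one_pos (by linarith), hi] with n hn hin
  calc (P n).real {ω | n * ε < S n ω} ≤ (P n).real {ω | n * ε ≤ S n ω} :=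
        measureReal_mono fun _ (hω : n * ε < _) => hω.le
    _ ≤ exp (-θ * (n * ε)) * mgf (S n) (P n) θ := measure_ge_le_exp_mul_mgf _ hθ hin
    _ ≤ exp (n * m) := by rw [mul_left_comm]; simpa using hn

end LargeDeviations

section LocalGartnerEllis

variable {Ω : Type*} [MeasurableSpace Ω] {P : ℕ → Measure Ω} {S : ℕ → Ω → ℝ} {a : ℝ}
  {Λ Λ' : ℝ → ℝ}

lemma eventually_integrable_exp_mul_of_mem (hconv : StrictConvexOn ℝ (Icc (-a) a) Λ)
    (hderiv : ∀ θ ∈ Icc (-a) a, HasDerivWithinAt Λ (Λ' θ) (Icc (-a) a) θ) (hΛ0 : Λ 0 = 0)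
    (hΛ'0 : Λ' 0 = 0)
    (hlim : ∀ θ ∈ Icc (-a) a,
      Tendsto (fun n : ℕ => (n : ℝ)⁻¹ * cgf (S n) (P n) θ) atTop (𝓝 (Λ θ)))
    {θ : ℝ} (hθ : θ ∈ Icc (-a) a) (hθ0 : θ ≠ 0) :
    ∀ᶠ n in atTop, Integrable (fun ω => exp (θ * S n ω)) (P n) := by
  have h0 : (0 : ℝ) ∈ Icc (-a) a := ⟨by linarith [hθ.1, hθ.2], by linarith [hθ.1, hθ.2]⟩
  exact eventually_integrable_exp_mul_of_tendsto (hlim θ hθ)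
    (hconv.pos_of_hasDerivWithinAt_zero h0 hΛ0 ((hderiv 0 h0).congr_deriv hΛ'0) hθ hθ0).ne'

variable [∀ n, IsProbabilityMeasure (P n)]

lemma eventually_exp_mul_le_measureReal_gt_deriv (hS : ∀ n, Measurable (S n))
    (hconv : StrictConvexOn ℝ (Icc (-a) a) Λ)
    (hderiv : ∀ θ ∈ Icc (-a) a, HasDerivWithinAt Λ (Λ' θ) (Icc (-a) a) θ)
    (hcont : ContinuousOn Λ' (Icc (-a) a)) (hΛ0 : Λ 0 = 0) (hΛ'0 : Λ' 0 = 0)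
    (hlim : ∀ θ ∈ Icc (-a) a,
      Tendsto (fun n : ℕ => (n : ℝ)⁻¹ * cgf (S n) (P n) θ) atTop (𝓝 (Λ θ)))
    {θ m : ℝ} (hθ : θ ∈ Ioo 0 a) (hm : m < Λ θ - θ * Λ' θ) :
    ∀ᶠ n : ℕ in atTop, exp (n * m) ≤ (P n).real {ω | n * Λ' θ < S n ω} := by
  have hI : Ioo 0 a ⊆ Icc (-a) a := fun x hx => ⟨by linarith [hx.1, hx.2], hx.2.le⟩
  have hint : ∀ x ∈ Ioo 0 a, ∀ᶠ n in atTop, Integrable (fun ω => exp (x * S n ω)) (P n) :=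
    fun x hx => eventually_integrable_exp_mul_of_mem hconv hderiv hΛ0 hΛ'0 hlim (hI hx) hx.1.ne'
  have hΛcont : ContinuousOn Λ (Icc (-a) a) := fun x hx => (hderiv x hx).continuousWithinAt
  obtain ⟨η, hη, hηΛ⟩ : ∃ η ∈ Ioo θ a, η * Λ' η - Λ η < -m :=
    exists_mem_Ioo_lt_of_continuousOn_Icc ((continuousOn_id.mul hcont).sub hΛcont)
      ⟨(hI hθ).1, hθ.2⟩ (by linarith : θ * Λ' θ - Λ θ < -m)
  have hηI : η ∈ Ioo 0 a := ⟨hθ.1.trans hη.1, hη.2⟩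
  obtain ⟨ε', hηε', hε'⟩ : ∃ ε', Λ' η < ε' ∧ ε' < (Λ η - m) / η :=
    exists_between ((lt_div_iff₀ hηI.1).2 (by linarith))
  rw [lt_div_iff₀ hηI.1] at hε'
  obtain ⟨θ₂, hθ₂, hθ₂ε'⟩ : ∃ θ₂ ∈ Ioo η a, Λ' θ₂ < ε' :=
    exists_mem_Ioo_lt_of_continuousOn_Icc hcont ⟨(hI hηI).1, hη.2⟩ hηε'
  have hθ₂I : θ₂ ∈ Ioo 0 a := ⟨hηI.1.trans hθ₂.1, hθ₂.2⟩
  obtain ⟨θ₁, hθθ₁, hθ₁η⟩ := exists_between hη.1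
  have hθ₁I : θ₁ ∈ Ioo 0 a := ⟨hθ.1.trans hθθ₁, hθ₁η.trans hη.2⟩
  have hr₁ : (η - θ₁) * Λ' θ + Λ θ₁ < Λ η := by
    have hmono := hconv.strictMonoOn_of_hasDerivWithinAt hderiv (hI hθ) (hI hθ₁I) hθθ₁
    have := hconv.convexOn.add_mul_sub_le_of_hasDerivWithinAt (hI hθ₁I) (hI hηI)
      (hderiv θ₁ (hI hθ₁I))
    linarith [mul_lt_mul_of_pos_left hmono (sub_pos.2 hθ₁η)]
  have hr₂ : (η - θ₂) * ε' + Λ θ₂ < Λ η := by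
    have := hconv.convexOn.add_mul_sub_le_of_hasDerivWithinAt (hI hθ₂I) (hI hηI)
      (hderiv θ₂ (hI hθ₂I))
    linarith [mul_lt_mul_of_pos_left hθ₂ε' (sub_pos.2 hθ₂.1)]
  exact eventually_exp_mul_le_measureReal_gt_of_rates hS hθ₁η.le hθ₂.1.le hηI.1.le
    (hint θ₁ hθ₁I) (hint θ₂ hθ₂I) (hlim θ₁ (hI hθ₁I)) (hlim η (hI hηI)) (hlim θ₂ (hI hθ₂I))
    hr₁ hr₂ (by linarith)

lemma tendsto_inv_mul_log_measureReal_gt (hS : ∀ n, Measurable (S n)) (ha : 0 < a)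
    (hconv : StrictConvexOn ℝ (Icc (-a) a) Λ)
    (hderiv : ∀ θ ∈ Icc (-a) a, HasDerivWithinAt Λ (Λ' θ) (Icc (-a) a) θ)
    (hcont : ContinuousOn Λ' (Icc (-a) a)) (hΛ0 : Λ 0 = 0) (hΛ'0 : Λ' 0 = 0)
    (hlim : ∀ θ ∈ Icc (-a) a,
      Tendsto (fun n : ℕ => (n : ℝ)⁻¹ * cgf (S n) (P n) θ) atTop (𝓝 (Λ θ)))
    {ε : ℝ} (hε : 0 < ε) (hεa : ε < Λ' a) :
    Tendsto (fun n : ℕ => (n : ℝ)⁻¹ * log ((P n).real {ω | n * ε < S n ω})) atTop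
      (𝓝 (-legendreOn (Icc (-a) a) Λ ε)) := by
  have hI : Icc 0 a ⊆ Icc (-a) a := Icc_subset_Icc_left (by linarith)
  obtain ⟨θ, hθ, rfl⟩ : ε ∈ Λ' '' Ioo 0 a :=
    intermediate_value_Ioo ha.le (hcont.mono hI) ⟨by rwa [hΛ'0], hεa⟩
  have hθI : θ ∈ Icc (-a) a := hI (Ioo_subset_Icc_self hθ)
  rw [legendreOn_eq_of_hasDerivWithinAt hconv.convexOn hθI (hderiv θ hθI), neg_sub]
  exact tendsto_inv_mul_log_of_exp_bounds
    (fun m hm => eventually_exp_mul_le_measureReal_gt_deriv hS hconv hderiv hcont hΛ0 hΛ'0 hlim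
      hθ hm)
    (fun m hm => eventually_measureReal_gt_le_exp_mul hθ.1.le
      (eventually_integrable_exp_mul_of_mem hconv hderiv hΛ0 hΛ'0 hlim hθI hθ.1.ne')
      (hlim θ hθI) hm)

end LocalGartnerEllis

/-- **Proposition 4 : local Gärtner–Ellis theorem.** If
`(1/n) log 𝔼_n[e^{θ Sₙ}] → Λ(θ)` on `[−θ_Λ, θ_Λ]` with `Λ` strictly convex, continuously
differentiable and `Λ'(0) = 0`, then with `ε₊ = Λ'(θ_Λ) > 0`, `ε₋ = Λ'(−θ_Λ) < 0` and
`c(ε) = sup_{|θ| ≤ θ_Λ} (θε − Λ(θ))`, the rate function `c` is nonnegative, strictly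
convex and continuous on `[ε₋, ε₊]`, vanishes only at `0`, and
`(1/n) log ℙ_n(Sₙ > nε) → −c(ε)` for every `0 < ε < ε₊`. -/
theorem stmt_11 {Ω : Type*} [MeasurableSpace Ω]
    (P : ℕ → Measure Ω) (hP : ∀ n, IsProbabilityMeasure (P n))
    (S : ℕ → Ω → ℝ) (hS : ∀ n, Measurable (S n))
    (θΛ : ℝ) (hθΛ : 0 < θΛ)
    (Λ Λ' : ℝ → ℝ)
    -- Λ is strictly convex and continuously differentiable on [−θ_Λ, θ_Λ], Λ'(0) = 0
    (hconv : StrictConvexOn ℝ (Set.Icc (-θΛ) θΛ) Λ)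
    (hderiv : ∀ θ ∈ Set.Icc (-θΛ) θΛ, HasDerivWithinAt Λ (Λ' θ) (Set.Icc (-θΛ) θΛ) θ)
    (hcont : ContinuousOn Λ' (Set.Icc (-θΛ) θΛ))
    (hΛ'0 : Λ' 0 = 0)
    -- the scaled cumulant generating functions converge to Λ on [−θ_Λ, θ_Λ]
    (hlim : ∀ θ ∈ Set.Icc (-θΛ) θΛ,
        Tendsto (fun n : ℕ => (n : ℝ)⁻¹ * Real.log (∫ ω, Real.exp (θ * S n ω) ∂(P n)))
          atTop (𝓝 (Λ θ))) :
    0 < Λ' θΛ ∧ Λ' (-θΛ) < 0 ∧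
      ∀ c : ℝ → ℝ, (∀ ε : ℝ, c ε = ⨆ θ : Set.Icc (-θΛ) θΛ, ((θ : ℝ) * ε - Λ θ)) →
        (∀ ε ∈ Set.Icc (Λ' (-θΛ)) (Λ' θΛ), 0 ≤ c ε) ∧
        StrictConvexOn ℝ (Set.Icc (Λ' (-θΛ)) (Λ' θΛ)) c ∧
        ContinuousOn c (Set.Icc (Λ' (-θΛ)) (Λ' θΛ)) ∧
        (∀ ε ∈ Set.Icc (Λ' (-θΛ)) (Λ' θΛ), (c ε = 0 ↔ ε = 0)) ∧
        ∀ ε : ℝ, 0 < ε → ε < Λ' θΛ →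
          Tendsto (fun n : ℕ =>
              (n : ℝ)⁻¹ * Real.log ((P n {ω | (n : ℝ) * ε < S n ω}).toReal))
            atTop (𝓝 (-(c ε))) := by
  have := hP
  have hcgf : ∀ θ ∈ Icc (-θΛ) θΛ,
      Tendsto (fun n : ℕ => (n : ℝ)⁻¹ * cgf (S n) (P n) θ) atTop (𝓝 (Λ θ)) := hlim
  have h0 : (0 : ℝ) ∈ Icc (-θΛ) θΛ := ⟨by linarith, hθΛ.le⟩
  have hΛ0 : Λ 0 = 0 := tendsto_nhds_unique (hcgf 0 h0) (by simp [cgf_zero])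
  have hmono := hconv.strictMonoOn_of_hasDerivWithinAt hderiv
  refine ⟨hΛ'0 ▸ hmono h0 ⟨by linarith, le_rfl⟩ hθΛ,
    hΛ'0 ▸ hmono ⟨le_rfl, by linarith⟩ h0 (by linarith), fun c hc => ?_⟩
  obtain rfl : c = legendreOn (Icc (-θΛ) θΛ) Λ := funext hc
  have hsurj : Icc (Λ' (-θΛ)) (Λ' θΛ) ⊆ Λ' '' Icc (-θΛ) θΛ :=
    intermediate_value_Icc (by linarith) hcont
  refine ⟨fun ε hε => ?_, strictConvexOn_legendreOn hconv hderiv (convex_Icc _ _) hsurj,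
    (lipschitzOnWith_legendreOn ⟨θΛ, hθΛ.le⟩ (fun θ hθ => abs_le.2 hθ) hconv.convexOn hderiv
      hsurj).continuousOn, fun ε hε => ?_,
    fun ε hε hεa =>
      tendsto_inv_mul_log_measureReal_gt hS hθΛ hconv hderiv hcont hΛ0 hΛ'0 hcgf hε hεa⟩
  · obtain ⟨θ, hθ, rfl⟩ := hsurj hε
    exact legendreOn_nonneg hconv.convexOn h0 hΛ0 hθ (hderiv θ hθ)
  · obtain ⟨θ, hθ, rfl⟩ := hsurj hε
    exact legendreOn_deriv_eq_zero_iff hconv hderiv h0 hΛ0 hΛ'0 hθ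
end

section
/- Fix 0 < α ≤ 1, ε₀ > 0, and a compact set M ⊂ ℝ^d. The quasi-Hölder space V_α(M), equipped with the norm ‖f‖_α = ‖f‖_{L¹} + |f|_α, is a Banach algebra under pointwise multiplication: there exists a constant C > 0 (depending only on α, ε₀, d, M) such that for all f, g ∈ V_α(M), the product fg belongs to V_α(M) and ‖fg‖_α ≤ C ‖f‖_α ‖g‖_α. -/
open MeasureTheory Filter Topology
open scoped ENNReal

/-- The oscillation of `f` over `A` : the essential supremum of `|f x₁ − f x₂|` over
`A × A`, with respect to the product of the restrictions of Lebesgue measure to `A`. -/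
noncomputable def qhOsc {d : ℕ} (f : EuclideanSpace ℝ (Fin d) → ℝ)
    (A : Set (EuclideanSpace ℝ (Fin d))) : ℝ≥0∞ :=
  essSup (fun p : EuclideanSpace ℝ (Fin d) × EuclideanSpace ℝ (Fin d) =>
      (‖f p.1 - f p.2‖₊ : ℝ≥0∞))
    (((volume : Measure (EuclideanSpace ℝ (Fin d))).restrict A).prod
      ((volume : Measure (EuclideanSpace ℝ (Fin d))).restrict A))

/-- The quasi-Hölder seminorm `|f|_α = sup_{0 < ε ≤ ε₀} ε^{−α} ∫ osc(f, B_ε(x)) dx`. -/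
noncomputable def qhSeminorm {d : ℕ} (α ε₀ : ℝ)
    (f : EuclideanSpace ℝ (Fin d) → ℝ) : ℝ≥0∞ :=
  ⨆ ε ∈ Set.Ioc (0 : ℝ) ε₀,
    ENNReal.ofReal (ε ^ (-α)) * ∫⁻ x, qhOsc f (Metric.closedBall x ε) ∂volume

/-- Membership in the quasi-Hölder space `V_α(M)` : `f ∈ L¹(ℝ^d)`, `|f|_α < ∞` and
`supp f ⊂ M`. -/
def memVα {d : ℕ} (α ε₀ : ℝ) (M : Set (EuclideanSpace ℝ (Fin d)))
    (f : EuclideanSpace ℝ (Fin d) → ℝ) : Prop :=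
  Integrable f volume ∧ qhSeminorm α ε₀ f ≠ ∞ ∧ Function.support f ⊆ M

/-- The quasi-Hölder norm `‖f‖_α = ‖f‖_{L¹} + |f|_α`. -/
noncomputable def qhNorm {d : ℕ} (α ε₀ : ℝ) (f : EuclideanSpace ℝ (Fin d) → ℝ) : ℝ :=
  (∫ x, |f x|) + (qhSeminorm α ε₀ f).toReal

/-!
Functions in `V_α` are essentially bounded: for `y` in a ball `B` of radius `ε₀/2`,
averaging `|f y| ≤ osc(f, B) + |f z|` over `z ∈ B` and using `osc(f, B) ≤ osc(f, B_{ε₀}(x))`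
for every `x ∈ B` gives `|B| ‖f‖_∞ ≤ ε₀^α |f|_α + ‖f‖₁`. The splitting
`f x₁ g x₁ - f x₂ g x₂ = f x₁ (g x₁ - g x₂) + (f x₁ - f x₂) g x₂` then gives
`osc(fg, A) ≤ ‖f‖_∞ osc(g, A) + ‖g‖_∞ osc(f, A)`, hence `|fg|_α ≤ ‖f‖_∞ |g|_α + ‖g‖_∞ |f|_α`,
while `‖fg‖₁ ≤ ‖f‖_∞ ‖g‖₁`.
-/

theorem ae_of_forall_ae_restrict_nhds {X : Type*} [TopologicalSpace X] [LindelofSpace X]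
    [MeasurableSpace X] {μ : Measure X} {p : X → Prop}
    (h : ∀ x, ∃ U ∈ 𝓝 x, ∀ᵐ y ∂μ.restrict U, p y) : ∀ᵐ y ∂μ, p y := by
  choose U hU hp using h
  obtain ⟨t, ht, hcover⟩ := countable_cover_nhds hU
  rw [← Measure.restrict_univ (μ := μ), ← hcover, ae_restrict_biUnion_iff _ ht]
  exact fun x _ => hp x

section QuasiHolder

variable {d : ℕ}

open Metric

local notation "ℝᵈ" => EuclideanSpace ℝ (Fin d)

theorem qhOsc_le_iff {f : ℝᵈ → ℝ} {A : Set ℝᵈ} {c : ℝ≥0∞} :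
    qhOsc f A ≤ c ↔
      ∀ᵐ p ∂(volume.restrict A).prod (volume.restrict A), ‖f p.1 - f p.2‖ₑ ≤ c :=
  ⟨fun h => (ENNReal.ae_le_essSup _).mono fun _ hp => hp.trans h, essSup_le_of_ae_le c⟩

theorem qhOsc_congr_ae (f : ℝᵈ → ℝ) {A B : Set ℝᵈ} (h : A =ᵐ[volume] B) :
    qhOsc f A = qhOsc f B := by
  rw [qhOsc, qhOsc, Measure.restrict_congr_set h]

theorem qhOsc_mono (f : ℝᵈ → ℝ) {A B : Set ℝᵈ} (h : A ⊆ B) : qhOsc f A ≤ qhOsc f B :=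
  qhOsc_le_iff.2 <| ae_mono (Measure.prod_mono (Measure.restrict_mono h le_rfl)
    (Measure.restrict_mono h le_rfl)) (qhOsc_le_iff.1 le_rfl)

theorem qhOsc_le_iSup_of_prod_subset {ι : Type*} [Countable ι] (f : ℝᵈ → ℝ) {A : Set ℝᵈ}
    {B : ι → Set ℝᵈ} (h : A ×ˢ A ⊆ ⋃ i, B i ×ˢ B i) : qhOsc f A ≤ ⨆ i, qhOsc f (B i) := by
  rw [qhOsc_le_iff, Measure.prod_restrict]
  refine ae_restrict_of_ae_restrict_of_subset h ((ae_restrict_iUnion_iff _ _).2 fun i => ?_)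
  rw [← Measure.prod_restrict]
  exact qhOsc_le_iff.1 (le_iSup (fun i => qhOsc f (B i)) i)

theorem qhOsc_closedBall_eq_ball (f : ℝᵈ → ℝ) (x : ℝᵈ) {ε : ℝ} (hε : 0 < ε) :
    qhOsc f (closedBall x ε) = qhOsc f (ball x ε) := by
  refine qhOsc_congr_ae f ?_
  rw [← ball_union_sphere]
  exact union_ae_eq_left_of_ae_eq_empty
    (ae_eq_empty.2 (Measure.addHaar_sphere_of_ne_zero _ x hε.ne'))

theorem lowerSemicontinuous_qhOsc_closedBall (f : ℝᵈ → ℝ) {ε : ℝ} (hε : 0 < ε) :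
    LowerSemicontinuous fun x : ℝᵈ => qhOsc f (closedBall x ε) := by
  -- If `u n → x`, the balls `closedBall (u n) ε` cover `ball x ε`, which has the same
  -- oscillation as `closedBall x ε` because spheres are null.
  refine lowerSemicontinuous_iff_isClosed_preimage.2 fun c =>
    isSeqClosed_iff_isClosed.1 fun {u x} hu hux => ?_
  show qhOsc f (closedBall x ε) ≤ c
  rw [qhOsc_closedBall_eq_ball f x hε]
  refine (qhOsc_le_iSup_of_prod_subset f ?_).trans (iSup_le hu)
  rintro ⟨y, z⟩ ⟨hy, hz⟩
  obtain ⟨n, hyn, hzn⟩ := ((hux.eventually (isOpen_ball.mem_nhds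
    (mem_ball_comm.1 hy))).and (hux.eventually (isOpen_ball.mem_nhds
    (mem_ball_comm.1 hz)))).exists
  exact Set.mem_iUnion.2 ⟨n, ball_subset_closedBall (mem_ball_comm.1 hyn),
    ball_subset_closedBall (mem_ball_comm.1 hzn)⟩

theorem measure_closedBall_mul_qhOsc_le (f : ℝᵈ → ℝ) (x : ℝᵈ) (r : ℝ) :
    volume (closedBall x r) * qhOsc f (closedBall x r)
      ≤ ∫⁻ y, qhOsc f (closedBall y (2 * r)) := by
  calc volume (closedBall x r) * qhOsc f (closedBall x r)
      = ∫⁻ _ in closedBall x r, qhOsc f (closedBall x r) := by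
        rw [setLIntegral_const, mul_comm]
    _ ≤ ∫⁻ y in closedBall x r, qhOsc f (closedBall y (2 * r)) := by
        refine setLIntegral_mono' measurableSet_closedBall fun y hy => qhOsc_mono f ?_
        exact closedBall_subset_closedBall' (by rw [dist_comm]; linarith [mem_closedBall.1 hy])
    _ ≤ ∫⁻ y, qhOsc f (closedBall y (2 * r)) := setLIntegral_le_lintegral _ _

theorem lintegral_qhOsc_le_qhSeminorm (α : ℝ) {ε ε₀ : ℝ} (hε : ε ∈ Set.Ioc 0 ε₀)
    (f : ℝᵈ → ℝ) :
    ∫⁻ x, qhOsc f (closedBall x ε) ≤ ENNReal.ofReal (ε ^ α) * qhSeminorm α ε₀ f := by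
  have hinv : ENNReal.ofReal (ε ^ α) * ENNReal.ofReal (ε ^ (-α)) = 1 := by
    rw [← ENNReal.ofReal_mul (Real.rpow_nonneg hε.1.le α), ← Real.rpow_add hε.1,
      add_neg_cancel, Real.rpow_zero, ENNReal.ofReal_one]
  calc ∫⁻ x, qhOsc f (closedBall x ε)
      = ENNReal.ofReal (ε ^ α) * (ENNReal.ofReal (ε ^ (-α)) *
          ∫⁻ x, qhOsc f (closedBall x ε)) := by rw [← mul_assoc, hinv, one_mul]
    _ ≤ ENNReal.ofReal (ε ^ α) * qhSeminorm α ε₀ f :=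
        mul_le_mul_right (le_biSup (fun ε => ENNReal.ofReal (ε ^ (-α)) *
          ∫⁻ x, qhOsc f (closedBall x ε)) hε) _

theorem ae_restrict_measure_mul_enorm_le (f : ℝᵈ → ℝ) (A : Set ℝᵈ) :
    ∀ᵐ y ∂volume.restrict A,
      volume A * ‖f y‖ₑ ≤ volume A * qhOsc f A + ∫⁻ z in A, ‖f z‖ₑ := by
  filter_upwards [Measure.ae_ae_of_ae_prod (qhOsc_le_iff.1 le_rfl)] with y hy
  calc volume A * ‖f y‖ₑ = ∫⁻ _ in A, ‖f y‖ₑ := by rw [setLIntegral_const, mul_comm]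
    _ ≤ ∫⁻ z in A, (qhOsc f A + ‖f z‖ₑ) := by
        refine lintegral_mono_ae (hy.mono fun z hz => ?_)
        calc ‖f y‖ₑ = ‖(f y - f z) + f z‖ₑ := by rw [sub_add_cancel]
          _ ≤ ‖f y - f z‖ₑ + ‖f z‖ₑ := enorm_add_le _ _
          _ ≤ qhOsc f A + ‖f z‖ₑ := add_le_add_left hz _
    _ = volume A * qhOsc f A + ∫⁻ z in A, ‖f z‖ₑ := by
        rw [lintegral_add_left measurable_const, setLIntegral_const, mul_comm]

theorem ae_measure_closedBall_mul_enorm_le (α : ℝ) {ε₀ : ℝ} (hε₀ : 0 < ε₀) (f : ℝᵈ → ℝ) :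
    ∀ᵐ y, volume (closedBall (0 : ℝᵈ) (ε₀ / 2)) * ‖f y‖ₑ
      ≤ ENNReal.ofReal (ε₀ ^ α) * qhSeminorm α ε₀ f + ∫⁻ z, ‖f z‖ₑ := by
  refine ae_of_forall_ae_restrict_nhds fun x =>
    ⟨closedBall x (ε₀ / 2), closedBall_mem_nhds x (by positivity), ?_⟩
  filter_upwards [ae_restrict_measure_mul_enorm_le f (closedBall x (ε₀ / 2))] with y hy
  rw [← Measure.addHaar_closedBall_center volume x]
  refine hy.trans (add_le_add ?_ (setLIntegral_le_lintegral _ _))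
  calc volume (closedBall x (ε₀ / 2)) * qhOsc f (closedBall x (ε₀ / 2))
      ≤ ∫⁻ y, qhOsc f (closedBall y (2 * (ε₀ / 2))) :=
        measure_closedBall_mul_qhOsc_le f x _
    _ ≤ ENNReal.ofReal (ε₀ ^ α) * qhSeminorm α ε₀ f := by
        rw [mul_div_cancel₀ ε₀ two_ne_zero]
        exact lintegral_qhOsc_le_qhSeminorm α ⟨hε₀, le_rfl⟩ f

variable (d) in
noncomputable def qhSupConst (α ε₀ : ℝ) : ℝ≥0∞ :=
  (1 + ENNReal.ofReal (ε₀ ^ α)) / volume (closedBall (0 : ℝᵈ) (ε₀ / 2))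

/-- `‖f‖_α` computed in `ℝ≥0∞`, where `qhNorm` would silently take junk values. -/
noncomputable def qhENorm (α ε₀ : ℝ) (f : ℝᵈ → ℝ) : ℝ≥0∞ :=
  (∫⁻ x, ‖f x‖ₑ) + qhSeminorm α ε₀ f

theorem lintegral_enorm_le_qhENorm (α ε₀ : ℝ) (f : ℝᵈ → ℝ) :
    ∫⁻ x, ‖f x‖ₑ ≤ qhENorm α ε₀ f :=
  le_self_add

theorem qhSeminorm_le_qhENorm (α ε₀ : ℝ) (f : ℝᵈ → ℝ) : qhSeminorm α ε₀ f ≤ qhENorm α ε₀ f :=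
  le_add_self

theorem qhSupConst_ne_zero (α ε₀ : ℝ) : qhSupConst d α ε₀ ≠ 0 :=
  ENNReal.div_ne_zero.2 ⟨by simp, measure_closedBall_lt_top.ne⟩

theorem qhSupConst_ne_top (α : ℝ) {ε₀ : ℝ} (hε₀ : 0 < ε₀) : qhSupConst d α ε₀ ≠ ⊤ :=
  ENNReal.div_ne_top (by simp) (measure_closedBall_pos _ _ (by positivity)).ne'

theorem ae_enorm_le_qhSupConst_mul (α : ℝ) {ε₀ : ℝ} (hε₀ : 0 < ε₀) (f : ℝᵈ → ℝ) :
    ∀ᵐ y, ‖f y‖ₑ ≤ qhSupConst d α ε₀ * qhENorm α ε₀ f := by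
  filter_upwards [ae_measure_closedBall_mul_enorm_le α hε₀ f] with y hy
  rw [qhSupConst, qhENorm, ← ENNReal.mul_div_right_comm,
    ENNReal.le_div_iff_mul_le (Or.inl (measure_closedBall_pos _ _ (by positivity)).ne')
      (Or.inl measure_closedBall_lt_top.ne), mul_comm]
  refine hy.trans ?_
  calc ENNReal.ofReal (ε₀ ^ α) * qhSeminorm α ε₀ f + ∫⁻ z, ‖f z‖ₑ
      ≤ ENNReal.ofReal (ε₀ ^ α) * qhSeminorm α ε₀ f + (∫⁻ z, ‖f z‖ₑ)
        + (qhSeminorm α ε₀ f + ENNReal.ofReal (ε₀ ^ α) * ∫⁻ z, ‖f z‖ₑ) := le_self_add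
    _ = (1 + ENNReal.ofReal (ε₀ ^ α)) * ((∫⁻ z, ‖f z‖ₑ) + qhSeminorm α ε₀ f) := by ring

theorem qhOsc_mul_le {f g : ℝᵈ → ℝ} {Kf Kg : ℝ≥0∞} (hf : ∀ᵐ x, ‖f x‖ₑ ≤ Kf)
    (hg : ∀ᵐ x, ‖g x‖ₑ ≤ Kg) (A : Set ℝᵈ) :
    qhOsc (f * g) A ≤ Kf * qhOsc g A + Kg * qhOsc f A := by
  have hf₁ := (Measure.quasiMeasurePreserving_fst (μ := volume.restrict A)
    (ν := volume.restrict A)).ae (ae_restrict_of_ae hf)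
  have hg₂ := (Measure.quasiMeasurePreserving_snd (μ := volume.restrict A)
    (ν := volume.restrict A)).ae (ae_restrict_of_ae hg)
  refine qhOsc_le_iff.2 ?_
  filter_upwards [qhOsc_le_iff.1 (le_refl (qhOsc f A)), qhOsc_le_iff.1 (le_refl (qhOsc g A)),
    hf₁, hg₂] with p hfp hgp hf₁p hg₂p
  calc ‖(f * g) p.1 - (f * g) p.2‖ₑ
      = ‖f p.1 * (g p.1 - g p.2) + (f p.1 - f p.2) * g p.2‖ₑ := by
        simp only [Pi.mul_apply]; congr 1; ring
    _ ≤ ‖f p.1‖ₑ * ‖g p.1 - g p.2‖ₑ + ‖g p.2‖ₑ * ‖f p.1 - f p.2‖ₑ := by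
        refine (enorm_add_le _ _).trans_eq ?_
        rw [enorm_mul, enorm_mul, mul_comm ‖f p.1 - f p.2‖ₑ]
    _ ≤ Kf * qhOsc g A + Kg * qhOsc f A := by gcongr

theorem qhSeminorm_mul_le (α ε₀ : ℝ) {f g : ℝᵈ → ℝ} {Kf Kg : ℝ≥0∞}
    (hf : ∀ᵐ x, ‖f x‖ₑ ≤ Kf) (hg : ∀ᵐ x, ‖g x‖ₑ ≤ Kg) :
    qhSeminorm α ε₀ (f * g) ≤ Kf * qhSeminorm α ε₀ g + Kg * qhSeminorm α ε₀ f := by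
  refine iSup₂_le fun ε hε => ?_
  have hmeas : ∀ h : ℝᵈ → ℝ, Measurable fun x => qhOsc h (closedBall x ε) :=
    fun h => (lowerSemicontinuous_qhOsc_closedBall h hε.1).measurable
  calc ENNReal.ofReal (ε ^ (-α)) * ∫⁻ x, qhOsc (f * g) (closedBall x ε)
      ≤ ENNReal.ofReal (ε ^ (-α)) * ∫⁻ x, (Kf * qhOsc g (closedBall x ε)
          + Kg * qhOsc f (closedBall x ε)) := by
        gcongr with x
        exact qhOsc_mul_le hf hg _
    _ = Kf * (ENNReal.ofReal (ε ^ (-α)) * ∫⁻ x, qhOsc g (closedBall x ε))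
        + Kg * (ENNReal.ofReal (ε ^ (-α)) * ∫⁻ x, qhOsc f (closedBall x ε)) := by
        rw [lintegral_add_left ((hmeas g).const_mul Kf), lintegral_const_mul Kf (hmeas g),
          lintegral_const_mul Kg (hmeas f)]
        ring
    _ ≤ Kf * qhSeminorm α ε₀ g + Kg * qhSeminorm α ε₀ f := by
        gcongr
        · exact le_biSup (fun ε => ENNReal.ofReal (ε ^ (-α)) *
            ∫⁻ x, qhOsc g (closedBall x ε)) hε
        · exact le_biSup (fun ε => ENNReal.ofReal (ε ^ (-α)) *
            ∫⁻ x, qhOsc f (closedBall x ε)) hε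

theorem qhENorm_mul_le (α : ℝ) {ε₀ : ℝ} (hε₀ : 0 < ε₀) (f : ℝᵈ → ℝ) {g : ℝᵈ → ℝ}
    (hg : AEStronglyMeasurable g) :
    qhENorm α ε₀ (f * g)
      ≤ 2 * qhSupConst d α ε₀ * qhENorm α ε₀ f * qhENorm α ε₀ g := by
  have hf := ae_enorm_le_qhSupConst_mul α hε₀ f
  have hg' := ae_enorm_le_qhSupConst_mul α hε₀ g
  set c := qhSupConst d α ε₀
  have hL1 : ∫⁻ x, ‖(f * g) x‖ₑ ≤ c * qhENorm α ε₀ f * ∫⁻ x, ‖g x‖ₑ := by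
    rw [← lintegral_const_mul'' _ hg.enorm]
    refine lintegral_mono_ae (hf.mono fun x hx => ?_)
    rw [Pi.mul_apply, enorm_mul]
    gcongr
  calc qhENorm α ε₀ (f * g)
      ≤ c * qhENorm α ε₀ f * (∫⁻ x, ‖g x‖ₑ) + (c * qhENorm α ε₀ f * qhSeminorm α ε₀ g
          + c * qhENorm α ε₀ g * qhSeminorm α ε₀ f) :=
        add_le_add hL1 (qhSeminorm_mul_le α ε₀ hf hg')
    _ = c * qhENorm α ε₀ f * qhENorm α ε₀ g + c * qhENorm α ε₀ g * qhSeminorm α ε₀ f := by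
        rw [qhENorm.eq_1 α ε₀ g]; ring
    _ ≤ c * qhENorm α ε₀ f * qhENorm α ε₀ g + c * qhENorm α ε₀ g * qhENorm α ε₀ f := by
        gcongr; exact qhSeminorm_le_qhENorm α ε₀ f
    _ = 2 * c * qhENorm α ε₀ f * qhENorm α ε₀ g := by ring

theorem qhNorm_eq_toReal_qhENorm (α ε₀ : ℝ) {f : ℝᵈ → ℝ} (hf : Integrable f)
    (hfS : qhSeminorm α ε₀ f ≠ ⊤) : qhNorm α ε₀ f = (qhENorm α ε₀ f).toReal := by
  rw [qhNorm, qhENorm, ENNReal.toReal_add hf.2.ne hfS,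
    ← integral_norm_eq_lintegral_enorm hf.1]
  rfl

end QuasiHolder

theorem stmt_16_general (d : ℕ) (α ε₀ : ℝ) (hε₀ : 0 < ε₀)
    (M : Set (EuclideanSpace ℝ (Fin d))) :
    ∃ C : ℝ, 0 < C ∧
      ∀ f g : EuclideanSpace ℝ (Fin d) → ℝ, memVα α ε₀ M f → memVα α ε₀ M g →
        memVα α ε₀ M (f * g) ∧
        qhNorm α ε₀ (f * g) ≤ C * qhNorm α ε₀ f * qhNorm α ε₀ g := by
  refine ⟨(2 * qhSupConst d α ε₀).toReal, ENNReal.toReal_pos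
    (mul_ne_zero two_ne_zero (qhSupConst_ne_zero α ε₀))
    (ENNReal.mul_ne_top ENNReal.ofNat_ne_top (qhSupConst_ne_top α hε₀)), ?_⟩
  rintro f g ⟨hfi, hfS, hfM⟩ ⟨hgi, hgS, -⟩
  have hbound := qhENorm_mul_le α hε₀ f hgi.1
  have hfin : 2 * qhSupConst d α ε₀ * qhENorm α ε₀ f * qhENorm α ε₀ g ≠ ⊤ :=
    ENNReal.mul_ne_top (ENNReal.mul_ne_top (ENNReal.mul_ne_top ENNReal.ofNat_ne_top
      (qhSupConst_ne_top α hε₀)) (ENNReal.add_ne_top.2 ⟨hfi.2.ne, hfS⟩))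
      (ENNReal.add_ne_top.2 ⟨hgi.2.ne, hgS⟩)
  have hfg_fin : qhENorm α ε₀ (f * g) ≠ ⊤ := ne_top_of_le_ne_top hfin hbound
  have hfg : memVα α ε₀ M (f * g) :=
    ⟨⟨hfi.1.mul hgi.1, (lintegral_enorm_le_qhENorm α ε₀ (f * g)).trans_lt hfg_fin.lt_top⟩,
      ne_top_of_le_ne_top hfg_fin (qhSeminorm_le_qhENorm α ε₀ (f * g)),
      (Function.support_mul_subset_left f g).trans hfM⟩
  refine ⟨hfg, ?_⟩
  rw [qhNorm_eq_toReal_qhENorm α ε₀ hfg.1 hfg.2.1, qhNorm_eq_toReal_qhENorm α ε₀ hfi hfS,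
    qhNorm_eq_toReal_qhENorm α ε₀ hgi hgS, ← ENNReal.toReal_mul, ← ENNReal.toReal_mul]
  exact ENNReal.toReal_mono hfin hbound

/-- The quasi-Hölder space `V_α(M)` (for `0 < α ≤ 1`, `ε₀ > 0`, `M`
compact) is a Banach algebra under pointwise multiplication : there is a constant
`C > 0` such that for all `f, g ∈ V_α(M)`, the pointwise product `f * g` belongs to
`V_α(M)` and `‖fg‖_α ≤ C ‖f‖_α ‖g‖_α`. -/
theorem stmt_16 (d : ℕ) (α ε₀ : ℝ) (hα : 0 < α) (hα1 : α ≤ 1) (hε₀ : 0 < ε₀)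
    (M : Set (EuclideanSpace ℝ (Fin d))) (hM : IsCompact M) :
    ∃ C : ℝ, 0 < C ∧
      ∀ f g : EuclideanSpace ℝ (Fin d) → ℝ, memVα α ε₀ M f → memVα α ε₀ M g →
        memVα α ε₀ M (f * g) ∧
        qhNorm α ε₀ (f * g) ≤ C * qhNorm α ε₀ f * qhNorm α ε₀ g :=
  stmt_16_general d α ε₀ hε₀ M
end
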